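/- arXiv:0812.2939 — 10 statements merged into one kernel-verified Lean document; each statement's English description precedes it below -/
import Mathlib

section
/- Let X and Y be real vector spaces. A function f : X → Y satisfies the mixed functional equation (1.5) if and only if there exist a symmetric bi-additive function Q₁ : X × X → Y (i.e. Q₁(x,y) = Q₁(y,x) and Q₁ is additive in each variable), a symmetric tri-additive function C : X × X × X → Y (i.e. C is invariant under permutations of its arguments and additive in each variable), and a symmetric multi-additive function Q₂ : X × X × X × X → Y (invariant under permutations of its arguments and additive in each variable), such that f(x) = Q₁(x,x) + C(x,x,x) + Q₂(x,x,x,x) for all x ∈ X; moreover, in this case Q₁, C and Q₂ are unique. -/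
open Filter Topology

/-- The mixed quadratic-cubic-quartic functional equation (1.5). -/
def MixedEq {X Y : Type*} [AddCommGroup X] [AddCommGroup Y] (f : X → Y) : Prop :=
  ∀ x y : X, 3 • (f (x + 2 • y) + f (x - 2 • y)) =
    12 • (f (x + y) + f (x - y)) + 4 • f (3 • y) - 18 • f (2 • y) + 36 • f y - 18 • f x

/-- The difference operator D_f. -/
def Dop {X Y : Type*} [AddCommGroup X] [AddCommGroup Y] (f : X → Y) (x y : X) : Y :=
  3 • (f (x + 2 • y) + f (x - 2 • y)) - 12 • (f (x + y) + f (x - y))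
    - 4 • f (3 • y) + 18 • f (2 • y) - 36 • f y + 18 • f x

/-- Quadratic functional equation. -/
def IsQuadratic {X Y : Type*} [AddCommGroup X] [AddCommGroup Y] (g : X → Y) : Prop :=
  ∀ x y : X, g (x + y) + g (x - y) = 2 • g x + 2 • g y

/-- Cubic functional equation. -/
def IsCubic {X Y : Type*} [AddCommGroup X] [AddCommGroup Y] (c : X → Y) : Prop :=
  ∀ x y : X, c (2 • x + y) + c (2 • x - y) = 2 • c (x + y) + 2 • c (x - y) + 12 • c x

/-- Quartic functional equation. -/
def IsQuartic {X Y : Type*} [AddCommGroup X] [AddCommGroup Y] (q : X → Y) : Prop :=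
  ∀ x y : X, q (2 • x + y) + q (2 • x - y) = 4 • (q (x + y) + q (x - y)) + 24 • q x - 6 • q y

/-- A symmetric bi-additive map. -/
def SymBiAdd {X Y : Type*} [AddCommGroup X] [AddCommGroup Y] (B : X → X → Y) : Prop :=
  (∀ x y, B x y = B y x) ∧
  (∀ x x' y, B (x + x') y = B x y + B x' y) ∧
  (∀ x y y', B x (y + y') = B x y + B x y')

/-- A symmetric tri-additive map (invariant under permutations, additive in each variable). -/
def SymTriAdd {X Y : Type*} [AddCommGroup X] [AddCommGroup Y] (C : X → X → X → Y) : Prop :=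
  (∀ x y z, C x y z = C y x z) ∧
  (∀ x y z, C x y z = C x z y) ∧
  (∀ x x' y z, C (x + x') y z = C x y z + C x' y z) ∧
  (∀ x y y' z, C x (y + y') z = C x y z + C x y' z) ∧
  (∀ x y z z', C x y (z + z') = C x y z + C x y z')

/-- A symmetric quadri-additive map (invariant under permutations, additive in each variable). -/
def SymQuadAdd {X Y : Type*} [AddCommGroup X] [AddCommGroup Y] (Q : X → X → X → X → Y) : Prop :=
  (∀ x y z w, Q x y z w = Q y x z w) ∧
  (∀ x y z w, Q x y z w = Q x z y w) ∧
  (∀ x y z w, Q x y z w = Q x y w z) ∧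
  (∀ x x' y z w, Q (x + x') y z w = Q x y z w + Q x' y z w) ∧
  (∀ x y y' z w, Q x (y + y') z w = Q x y z w + Q x y' z w) ∧
  (∀ x y z z' w, Q x y (z + z') w = Q x y z w + Q x y z' w) ∧
  (∀ x y z w w', Q x y z (w + w') = Q x y z w + Q x y z w')

/-!
Write `Δ_y f (x) = f (x + y) + f (x - y) - 2 f x`. Subtracting from (1.5) its instance at `x = 0`
shows that `φ_x (y) = Δ_y f (x) - Δ_y f (0)` satisfies `φ_x (2 y) = 4 φ_x (y)`, and eleven
instances of this identity combine into the quadratic functional equation for `φ_x`. Polarising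
`φ_x` gives the cubic form from the odd part of `f` and the quartic form from the even part; the
even part minus the diagonal of the quartic form is quadratic and is polarised in turn.
Conversely, a diagonal of a symmetric multi-additive map is a polynomial in `m, n` along
`m • x + n • y`, which turns (1.5) into a polynomial identity. For uniqueness, evaluating at `x`,
`-x` and `2 • x` separates the three homogeneous parts, and a symmetric multi-additive map is
determined by its diagonal.
-/

section Quadratic

variable {X Y : Type*} [AddCommGroup X] [AddCommGroup Y] [Module ℝ Y]

theorem map_add_of_jensen {φ : X → Y} (h0 : φ 0 = 0) (h : ∀ x y, φ (x + y) + φ (x - y) = 2 • φ x)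
    (x y : X) : φ (x + y) = φ x + φ y := by
  have h1 := h x y
  have h2 := h y x
  have h3 := h 0 (x - y)
  abel_nf at h1 h2 h3
  linear_combination (norm := module) (2⁻¹ : ℝ) • (h1 + h2 - h3) - h0

variable {g : X → Y}

theorem IsQuadratic.map_zero (hg : IsQuadratic g) : g 0 = 0 := by
  have h := hg 0 0
  simp only [add_zero, sub_zero] at h
  linear_combination (norm := module) (-2⁻¹ : ℝ) • h

theorem IsQuadratic.map_neg (hg : IsQuadratic g) (x : X) : g (-x) = g x := by
  have h := hg 0 x
  rw [zero_add, zero_sub, hg.map_zero] at h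
  linear_combination (norm := module) h

theorem IsQuadratic.polar_add_right (hg : IsQuadratic g) (x y z : X) :
    g (x + (y + z)) - g (x - (y + z)) = (g (x + y) - g (x - y)) + (g (x + z) - g (x - z)) := by
  refine map_add_of_jensen (φ := fun t => g (x + t) - g (x - t)) (by simp) (fun y z => ?_) y z
  have h1 := hg (x + y) z
  have h2 := hg (x - y) z
  abel_nf at h1 h2 ⊢
  linear_combination (norm := module) h1 - h2

noncomputable def polarization₂ (g : X → Y) (x y : X) : Y := (4⁻¹ : ℝ) • (g (x + y) - g (x - y))

theorem IsQuadratic.symBiAdd_polarization₂ (hg : IsQuadratic g) : SymBiAdd (polarization₂ g) := by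
  have symm (x y : X) : polarization₂ g x y = polarization₂ g y x := by
    rw [polarization₂, polarization₂, add_comm y x, ← neg_sub x y, hg.map_neg]
  have add_right (x y z : X) :
      polarization₂ g x (y + z) = polarization₂ g x y + polarization₂ g x z := by
    simp only [polarization₂, hg.polar_add_right, smul_add]
  exact ⟨symm, fun x x' y => by rw [symm, add_right, symm x, symm x'], add_right⟩

theorem IsQuadratic.polarization₂_self (hg : IsQuadratic g) (x : X) :
    polarization₂ g x x = g x := by
  have h := hg x x
  rw [sub_self, hg.map_zero] at h
  rw [polarization₂, sub_self, hg.map_zero]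
  linear_combination (norm := module) (4⁻¹ : ℝ) • h

end Quadratic

section SecondDifference

variable {X Y : Type*} [AddCommGroup X] [AddCommGroup Y]

/-- `Δ_y f (x) - Δ_y f (0)` for `f 0 = 0`, where `Δ_y f (x) = f (x + y) + f (x - y) - 2 • f x`.
-/
def secondDiff (f : X → Y) (x y : X) : Y := f (x + y) + f (x - y) - 2 • f x - f y - f (-y)

theorem secondDiff_comm {f : X → Y} (heven : ∀ x, f (-x) = f x) (x y : X) :
    secondDiff f x y = secondDiff f y x := by
  rw [secondDiff, secondDiff, heven, heven, add_comm y x, ← neg_sub x y, heven]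
  abel

theorem isQuadratic_secondDiff_of_two_smul [Module ℝ Y] {f : X → Y}
    (h : ∀ x y, secondDiff f x (2 • y) = 4 • secondDiff f x y) (x : X) :
    IsQuadratic (secondDiff f x) := by
  intro u v
  -- The coefficients solve a linear system over the instances of `h` on the lattice spanned by
  -- `x`, `u` and `v`.
  linear_combination (norm := skip)
    (12⁻¹ : ℝ) • (h x (u + v) + h x (u - v) - h (x + 2 • u) v - h (x - 2 • u) v
      + h (2 • v) u + h (-(2 • v)) u)
    - (3⁻¹ : ℝ) • (h (x + v) u + h (x - v) u - h u v - h (-u) v) + (2⁻¹ : ℝ) • h x u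
  simp only [secondDiff]
  abel_nf
  module

end SecondDifference

namespace MixedEq

variable {X Y : Type*} [AddCommGroup X] [AddCommGroup Y] {f g : X → Y}

theorem comp_neg (hf : MixedEq f) : MixedEq (fun x => f (-x)) := by
  intro x y
  have h := hf (-x) (-y)
  abel_nf at h ⊢
  exact h

variable [Module ℝ Y]

theorem map_zero (hf : MixedEq f) : f 0 = 0 := by
  have h := hf 0 0
  simp only [smul_zero, add_zero, sub_zero] at h
  linear_combination (norm := module) (-22⁻¹ : ℝ) • h

theorem secondDiff_two_smul (hf : MixedEq f) (x y : X) :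
    secondDiff f x (2 • y) = 4 • secondDiff f x y := by
  linear_combination (norm := skip) (3⁻¹ : ℝ) • (hf x y - hf 0 y) + (6 : ℝ) • hf.map_zero
  simp only [secondDiff]
  abel_nf
  module

theorem isQuadratic_secondDiff (hf : MixedEq f) (x : X) : IsQuadratic (secondDiff f x) :=
  isQuadratic_secondDiff_of_two_smul hf.secondDiff_two_smul x

theorem smul_add_smul (a b : ℝ) (hf : MixedEq f) (hg : MixedEq g) :
    MixedEq (fun x => a • f x + b • g x) := fun x y => by
  linear_combination (norm := module) a • hf x y + b • hg x y

end MixedEq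

section Expansion

variable {X Y : Type*} [AddCommGroup X] [AddCommGroup Y]

theorem map_zsmul_of_map_add {φ : X → Y} (h : ∀ x y, φ (x + y) = φ x + φ y) (k : ℤ) (x : X) :
    φ (k • x) = k • φ x :=
  map_zsmul (AddMonoidHom.mk' φ h) k x

theorem SymBiAdd.apply_zsmul_add_zsmul {B : X → X → Y} (hB : SymBiAdd B) (m n : ℤ) (x y : X) :
    B (m • x + n • y) (m • x + n • y) =
      (m ^ 2) • B x x + (2 * m * n) • B x y + (n ^ 2) • B y y := by
  obtain ⟨s12, a1, a2⟩ := hB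
  have z1 (k : ℤ) (u v : X) : B (k • u) v = k • B u v :=
    map_zsmul_of_map_add (φ := (B · v)) (a1 · · v) k u
  have z2 (k : ℤ) (u v : X) : B u (k • v) = k • B u v := map_zsmul_of_map_add (a2 u) k v
  simp only [a1, a2, z1, z2, s12 y x]
  module

theorem SymTriAdd.apply_zsmul_add_zsmul {C : X → X → X → Y} (hC : SymTriAdd C) (m n : ℤ) (x y : X) :
    C (m • x + n • y) (m • x + n • y) (m • x + n • y) = (m ^ 3) • C x x x
      + (3 * m ^ 2 * n) • C x x y + (3 * m * n ^ 2) • C x y y + (n ^ 3) • C y y y := by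
  obtain ⟨s12, s23, a1, a2, a3⟩ := hC
  have z1 (k : ℤ) (u v w : X) : C (k • u) v w = k • C u v w :=
    map_zsmul_of_map_add (φ := (C · v w)) (a1 · · v w) k u
  have z2 (k : ℤ) (u v w : X) : C u (k • v) w = k • C u v w :=
    map_zsmul_of_map_add (φ := (C u · w)) (a2 u · · w) k v
  have z3 (k : ℤ) (u v w : X) : C u v (k • w) = k • C u v w := map_zsmul_of_map_add (a3 u v) k w
  simp only [a1, a2, a3, z1, z2, z3, s12 y x, s23 x y x, s23 y y x]
  module

theorem SymQuadAdd.apply_zsmul_add_zsmul {Q : X → X → X → X → Y} (hQ : SymQuadAdd Q)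
    (m n : ℤ) (x y : X) :
    Q (m • x + n • y) (m • x + n • y) (m • x + n • y) (m • x + n • y) = (m ^ 4) • Q x x x x
      + (4 * m ^ 3 * n) • Q x x x y + (6 * m ^ 2 * n ^ 2) • Q x x y y
      + (4 * m * n ^ 3) • Q x y y y + (n ^ 4) • Q y y y y := by
  obtain ⟨s12, s23, s34, a1, a2, a3, a4⟩ := hQ
  have z1 (k : ℤ) (u v w r : X) : Q (k • u) v w r = k • Q u v w r :=
    map_zsmul_of_map_add (φ := (Q · v w r)) (a1 · · v w r) k u
  have z2 (k : ℤ) (u v w r : X) : Q u (k • v) w r = k • Q u v w r :=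
    map_zsmul_of_map_add (φ := (Q u · w r)) (a2 u · · w r) k v
  have z3 (k : ℤ) (u v w r : X) : Q u v (k • w) r = k • Q u v w r :=
    map_zsmul_of_map_add (φ := (Q u v · r)) (a3 u v · · r) k w
  have z4 (k : ℤ) (u v w r : X) : Q u v w (k • r) = k • Q u v w r :=
    map_zsmul_of_map_add (a4 u v w) k r
  simp only [a1, a2, a3, a4, z1, z2, z3, z4, s12 y x, s23 x y x, s23 y y x,
    s34 x x y x, s34 x y y x, s34 y y y x]
  module

theorem SymBiAdd.apply_zsmul {B : X → X → Y} (hB : SymBiAdd B) (k : ℤ) (x : X) :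
    B (k • x) (k • x) = k ^ 2 • B x x := by
  simpa using hB.apply_zsmul_add_zsmul k 0 x x

theorem SymTriAdd.apply_zsmul {C : X → X → X → Y} (hC : SymTriAdd C) (k : ℤ) (x : X) :
    C (k • x) (k • x) (k • x) = k ^ 3 • C x x x := by
  simpa using hC.apply_zsmul_add_zsmul k 0 x x

theorem SymQuadAdd.apply_zsmul {Q : X → X → X → X → Y} (hQ : SymQuadAdd Q) (k : ℤ) (x : X) :
    Q (k • x) (k • x) (k • x) (k • x) = k ^ 4 • Q x x x x := by
  simpa using hQ.apply_zsmul_add_zsmul k 0 x x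

end Expansion

section Odd

variable {X Y : Type*} [AddCommGroup X] [AddCommGroup Y] [Module ℝ Y] {c : X → Y}

noncomputable def polarization₃ (c : X → Y) (x y z : X) : Y :=
  (24⁻¹ : ℝ) • (c (x + y + z) - c (x + y - z) - c (x - y + z) + c (x - y - z))

theorem symTriAdd_polarization₃ (hodd : ∀ x, c (-x) = -c x)
    (hc : ∀ x, IsQuadratic (secondDiff c x)) : SymTriAdd (polarization₃ c) := by
  have s12 (x y z : X) : polarization₃ c x y z = polarization₃ c y x z := by
    rw [polarization₃, polarization₃, show y - x + z = -(x - y - z) by abel,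
      show y - x - z = -(x - y + z) by abel, hodd, hodd]
    abel_nf
  have s23 (x y z : X) : polarization₃ c x y z = polarization₃ c x z y := by
    simp only [polarization₃]
    abel_nf
  have a3 (x y z z' : X) :
      polarization₃ c x y (z + z') = polarization₃ c x y z + polarization₃ c x y z' := by
    have h := (hc x).polar_add_right y z z'
    simp only [polarization₃, secondDiff, hodd] at h ⊢
    abel_nf at h ⊢
    linear_combination (norm := module) (24⁻¹ : ℝ) • h
  have a2 (x y y' z : X) :
      polarization₃ c x (y + y') z = polarization₃ c x y z + polarization₃ c x y' z := by
    rw [s23, a3, s23 x z, s23 x z]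
  have a1 (x x' y z : X) :
      polarization₃ c (x + x') y z = polarization₃ c x y z + polarization₃ c x' y z := by
    rw [s12, a2, s12 y, s12 y]
  exact ⟨s12, s23, a1, a2, a3⟩

theorem MixedEq.polarization₃_self (hf : MixedEq c) (hodd : ∀ x, c (-x) = -c x) (x : X) :
    polarization₃ c x x x = c x := by
  have h0 := hf 0 x
  have h1 := hf x x
  simp only [zero_add, zero_sub, hodd, hf.map_zero] at h0
  rw [show x - 2 • x = -x by abel, sub_self, hodd, hf.map_zero] at h1
  simp only [polarization₃, sub_self, zero_add, zero_sub, add_sub_cancel_right, hodd]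
  abel_nf at h0 h1 ⊢
  linear_combination (norm := module) (-24⁻¹ : ℝ) • h0 + (8⁻¹ : ℝ) • h1

end Odd

section Even

variable {X Y : Type*} [AddCommGroup X] [AddCommGroup Y] [Module ℝ Y] {p : X → Y}

noncomputable def polarization₄ (p : X → Y) (x y z w : X) : Y :=
  (192⁻¹ : ℝ) • (p (x + y + z + w) - p (x + y + z - w) - p (x + y - z + w) + p (x + y - z - w)
    - p (x - y + z + w) + p (x - y + z - w) + p (x - y - z + w) - p (x - y - z - w))

theorem symQuadAdd_polarization₄ (heven : ∀ x, p (-x) = p x)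
    (hp : ∀ x, IsQuadratic (secondDiff p x)) : SymQuadAdd (polarization₄ p) := by
  have s12 (x y z w : X) : polarization₄ p x y z w = polarization₄ p y x z w := by
    rw [polarization₄, polarization₄, show y - x + z + w = -(x - y - z - w) by abel,
      show y - x + z - w = -(x - y - z + w) by abel, show y - x - z + w = -(x - y + z - w) by abel,
      show y - x - z - w = -(x - y + z + w) by abel, heven, heven, heven, heven]
    abel_nf
  have s23 (x y z w : X) : polarization₄ p x y z w = polarization₄ p x z y w := by
    simp only [polarization₄]
    abel_nf
  have s34 (x y z w : X) : polarization₄ p x y z w = polarization₄ p x y w z := by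
    simp only [polarization₄]
    abel_nf
  have a4 (x y z w w' : X) :
      polarization₄ p x y z (w + w') = polarization₄ p x y z w + polarization₄ p x y z w' := by
    have h1 := (hp (x + y)).polar_add_right z w w'
    have h2 := (hp (x - y)).polar_add_right z w w'
    simp only [polarization₄, secondDiff] at h1 h2 ⊢
    abel_nf at h1 h2 ⊢
    linear_combination (norm := module) (192⁻¹ : ℝ) • (h1 - h2)
  have a3 (x y z z' w : X) :
      polarization₄ p x y (z + z') w = polarization₄ p x y z w + polarization₄ p x y z' w := by
    rw [s34, a4, s34 x y w, s34 x y w]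
  have a2 (x y y' z w : X) :
      polarization₄ p x (y + y') z w = polarization₄ p x y z w + polarization₄ p x y' z w := by
    rw [s23, a3, s23 x z, s23 x z]
  have a1 (x x' y z w : X) :
      polarization₄ p (x + x') y z w = polarization₄ p x y z w + polarization₄ p x' y z w := by
    rw [s12, a2, s12 y, s12 y]
  exact ⟨s12, s23, s34, a1, a2, a3, a4⟩

theorem MixedEq.polarization₄_self_self (hf : MixedEq p) (heven : ∀ x, p (-x) = p x) (x y : X) :
    polarization₄ p x x y y = (12⁻¹ : ℝ) • secondDiff p x y := by
  have h : secondDiff p (2 • x) (2 • y) = 16 • secondDiff p x y := by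
    rw [hf.secondDiff_two_smul, secondDiff_comm heven (2 • x), hf.secondDiff_two_smul,
      secondDiff_comm heven y, smul_smul]
    norm_num
  simp only [polarization₄, secondDiff] at h ⊢
  abel_nf at h ⊢
  linear_combination (norm := module) (192⁻¹ : ℝ) • h + (96⁻¹ : ℝ) • hf.map_zero

theorem MixedEq.isQuadratic_sub_polarization₄ (hf : MixedEq p) (heven : ∀ x, p (-x) = p x) :
    IsQuadratic (fun x => p x - polarization₄ p x x x x) := by
  have hQ := symQuadAdd_polarization₄ heven hf.isQuadratic_secondDiff
  intro x y
  have e1 := hQ.apply_zsmul_add_zsmul 1 1 x y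
  have e2 := hQ.apply_zsmul_add_zsmul 1 (-1) x y
  simp only [one_smul, neg_smul, ← sub_eq_add_neg] at e1 e2
  have h := hf.polarization₄_self_self heven x y
  simp only [secondDiff] at h
  linear_combination (norm := module) -e1 - e2 - (12 : ℝ) • h + heven y

end Even

section Uniqueness

variable {X Y : Type*} [AddCommGroup X] [AddCommGroup Y] [Module ℝ Y]

theorem SymBiAdd.eq_of_diag {B B' : X → X → Y} (hB : SymBiAdd B) (hB' : SymBiAdd B')
    (h : ∀ x, B x x = B' x x) : B = B' := by
  funext x y
  have e := hB.apply_zsmul_add_zsmul 1 1 x y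
  have e' := hB'.apply_zsmul_add_zsmul 1 1 x y
  simp only [one_smul, h] at e e'
  linear_combination (norm := module) (2⁻¹ : ℝ) • (e' - e)

theorem SymTriAdd.eq_of_diag {C C' : X → X → X → Y} (hC : SymTriAdd C) (hC' : SymTriAdd C')
    (h : ∀ x, C x x x = C' x x x) : C = C' := by
  have hyy (x y : X) : C x y y = C' x y y := by
    have e₁ := hC.apply_zsmul_add_zsmul 1 1 x y
    have e₂ := hC.apply_zsmul_add_zsmul 1 (-1) x y
    have e₁' := hC'.apply_zsmul_add_zsmul 1 1 x y
    have e₂' := hC'.apply_zsmul_add_zsmul 1 (-1) x y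
    simp only [one_smul, h] at e₁ e₂ e₁' e₂'
    linear_combination (norm := module) (6⁻¹ : ℝ) • (e₁' + e₂' - e₁ - e₂)
  funext x y z
  have e := hyy x (y + z)
  obtain ⟨-, s23, -, a2, a3⟩ := hC
  obtain ⟨-, s23', -, a2', a3'⟩ := hC'
  rw [a2, a3, a3, a2', a3', a3', s23 x z y, s23' x z y, hyy x y, hyy x z] at e
  linear_combination (norm := module) (2⁻¹ : ℝ) • e

theorem SymQuadAdd.eq_of_diag {Q Q' : X → X → X → X → Y} (hQ : SymQuadAdd Q)
    (hQ' : SymQuadAdd Q') (h : ∀ x, Q x x x x = Q' x x x x) : Q = Q' := by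
  have hxxyy (x y : X) : Q x x y y = Q' x x y y := by
    have e₁ := hQ.apply_zsmul_add_zsmul 1 1 x y
    have e₂ := hQ.apply_zsmul_add_zsmul 1 (-1) x y
    have e₁' := hQ'.apply_zsmul_add_zsmul 1 1 x y
    have e₂' := hQ'.apply_zsmul_add_zsmul 1 (-1) x y
    simp only [one_smul, h] at e₁ e₂ e₁' e₂'
    linear_combination (norm := module) (12⁻¹ : ℝ) • (e₁' + e₂' - e₁ - e₂)
  obtain ⟨s12, -, s34, a1, a2, a3, a4⟩ := hQ
  obtain ⟨s12', -, s34', a1', a2', a3', a4'⟩ := hQ'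
  have hxxzw (x z w : X) : Q x x z w = Q' x x z w := by
    have e := hxxyy x (z + w)
    rw [a3, a4, a4, a3', a4', a4', s34 x x w z, s34' x x w z, hxxyy x z, hxxyy x w] at e
    linear_combination (norm := module) (2⁻¹ : ℝ) • e
  funext x y z w
  have e := hxxzw (x + y) z w
  rw [a1, a2, a2, a1', a2', a2', s12 y x, s12' y x, hxxzw x, hxxzw y] at e
  linear_combination (norm := module) (2⁻¹ : ℝ) • e

theorem diag_eq_of_sum_diag_eq {B B' : X → X → Y} {C C' : X → X → X → Y}
    {Q Q' : X → X → X → X → Y} (hB : SymBiAdd B) (hC : SymTriAdd C) (hQ : SymQuadAdd Q)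
    (hB' : SymBiAdd B') (hC' : SymTriAdd C') (hQ' : SymQuadAdd Q')
    (h : ∀ x, B x x + C x x x + Q x x x x = B' x x + C' x x x + Q' x x x x) (x : X) :
    B x x = B' x x ∧ C x x x = C' x x x ∧ Q x x x x = Q' x x x x := by
  have h₁ := h x
  have h₂ := h ((-1 : ℤ) • x)
  have h₃ := h ((2 : ℤ) • x)
  simp only [hB.apply_zsmul, hC.apply_zsmul, hQ.apply_zsmul, hB'.apply_zsmul, hC'.apply_zsmul,
    hQ'.apply_zsmul] at h₂ h₃
  refine ⟨?_, ?_, ?_⟩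
  · linear_combination (norm := module) h₁ + (3⁻¹ : ℝ) • h₂ - (12⁻¹ : ℝ) • h₃
  · linear_combination (norm := module) (2⁻¹ : ℝ) • (h₁ - h₂)
  · linear_combination (norm := module) (-2⁻¹ : ℝ) • h₁ + (6⁻¹ : ℝ) • h₂ + (12⁻¹ : ℝ) • h₃

end Uniqueness

section Representation

variable {X Y : Type*} [AddCommGroup X] [AddCommGroup Y] [Module ℝ Y]

theorem mixedEq_of_eq_diag {f : X → Y} {B : X → X → Y} {C : X → X → X → Y}
    {Q : X → X → X → X → Y} (hB : SymBiAdd B) (hC : SymTriAdd C) (hQ : SymQuadAdd Q)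
    (hf : ∀ x, f x = B x x + C x x x + Q x x x x) : MixedEq f := by
  intro x y
  have line (m n : ℤ) := hf (m • x + n • y)
  simp only [hB.apply_zsmul_add_zsmul, hC.apply_zsmul_add_zsmul, hQ.apply_zsmul_add_zsmul] at line
  have h₁ := line 1 2
  have h₂ := line 1 (-2)
  have h₃ := line 1 1
  have h₄ := line 1 (-1)
  have h₅ := line 0 3
  have h₆ := line 0 2
  have h₇ := line 0 1
  have h₈ := line 1 0
  simp only [zero_smul, zero_add, add_zero] at h₅ h₆ h₇ h₈
  abel_nf at h₁ h₂ h₃ h₄ h₅ h₆ h₇ h₈ ⊢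
  linear_combination (norm := module) (3 : ℝ) • (h₁ + h₂) - (12 : ℝ) • (h₃ + h₄) - (4 : ℝ) • h₅
    + (18 : ℝ) • h₆ - (36 : ℝ) • h₇ + (18 : ℝ) • h₈

theorem MixedEq.exists_eq_diag {f : X → Y} (hf : MixedEq f) :
    ∃ (B : X → X → Y) (C : X → X → X → Y) (Q : X → X → X → X → Y),
      SymBiAdd B ∧ SymTriAdd C ∧ SymQuadAdd Q ∧ ∀ x, f x = B x x + C x x x + Q x x x x := by
  set fₒ := fun x => (2⁻¹ : ℝ) • f x + (-2⁻¹ : ℝ) • f (-x) with hfₒ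
  set fₑ := fun x => (2⁻¹ : ℝ) • f x + (2⁻¹ : ℝ) • f (-x) with hfₑ
  have hmₒ : MixedEq fₒ := hf.smul_add_smul _ _ hf.comp_neg
  have hmₑ : MixedEq fₑ := hf.smul_add_smul _ _ hf.comp_neg
  have odd (x : X) : fₒ (-x) = -fₒ x := by simp only [hfₒ, neg_neg]; module
  have even (x : X) : fₑ (-x) = fₑ x := by simp only [hfₑ, neg_neg]; module
  have hq := hmₑ.isQuadratic_sub_polarization₄ even
  refine ⟨_, _, _, hq.symBiAdd_polarization₂,
    symTriAdd_polarization₃ odd hmₒ.isQuadratic_secondDiff,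
    symQuadAdd_polarization₄ even hmₑ.isQuadratic_secondDiff, fun x => ?_⟩
  rw [hq.polarization₂_self, hmₒ.polarization₃_self odd]
  simp only [hfₒ, hfₑ]
  module

end Representation

theorem stmt_0_general {X Y : Type*} [AddCommGroup X] [AddCommGroup Y] [Module ℝ Y]
    (f : X → Y) :
    (MixedEq f ↔
      ∃ (Q₁ : X → X → Y) (C : X → X → X → Y) (Q₂ : X → X → X → X → Y),
        SymBiAdd Q₁ ∧ SymTriAdd C ∧ SymQuadAdd Q₂ ∧
        ∀ x : X, f x = Q₁ x x + C x x x + Q₂ x x x x) ∧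
    (∀ (Q₁ Q₁' : X → X → Y) (C C' : X → X → X → Y) (Q₂ Q₂' : X → X → X → X → Y),
      SymBiAdd Q₁ → SymTriAdd C → SymQuadAdd Q₂ →
      SymBiAdd Q₁' → SymTriAdd C' → SymQuadAdd Q₂' →
      (∀ x : X, f x = Q₁ x x + C x x x + Q₂ x x x x) →
      (∀ x : X, f x = Q₁' x x + C' x x x + Q₂' x x x x) →
      Q₁ = Q₁' ∧ C = C' ∧ Q₂ = Q₂') := by
  refine ⟨⟨MixedEq.exists_eq_diag, fun ⟨_, _, _, hB, hC, hQ, hf⟩ => mixedEq_of_eq_diag hB hC hQ hf⟩,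
    fun Q₁ Q₁' C C' Q₂ Q₂' hB hC hQ hB' hC' hQ' hf hf' => ?_⟩
  have hdiag := diag_eq_of_sum_diag_eq hB hC hQ hB' hC' hQ' fun x => (hf x).symm.trans (hf' x)
  exact ⟨hB.eq_of_diag hB' fun x => (hdiag x).1, hC.eq_of_diag hC' fun x => (hdiag x).2.1,
    hQ.eq_of_diag hQ' fun x => (hdiag x).2.2⟩

theorem stmt_0 {X Y : Type*} [AddCommGroup X] [Module ℝ X] [AddCommGroup Y] [Module ℝ Y]
    (f : X → Y) :
    (MixedEq f ↔
      ∃ (Q₁ : X → X → Y) (C : X → X → X → Y) (Q₂ : X → X → X → X → Y),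
        SymBiAdd Q₁ ∧ SymTriAdd C ∧ SymQuadAdd Q₂ ∧
        ∀ x : X, f x = Q₁ x x + C x x x + Q₂ x x x x) ∧
    (∀ (Q₁ Q₁' : X → X → Y) (C C' : X → X → X → Y) (Q₂ Q₂' : X → X → X → X → Y),
      SymBiAdd Q₁ → SymTriAdd C → SymQuadAdd Q₂ →
      SymBiAdd Q₁' → SymTriAdd C' → SymQuadAdd Q₂' →
      (∀ x : X, f x = Q₁ x x + C x x x + Q₂ x x x x) →
      (∀ x : X, f x = Q₁' x x + C' x x x + Q₂' x x x x) →
      Q₁ = Q₁' ∧ C = C' ∧ Q₂ = Q₂') :=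
  stmt_0_general f
end

section
/- Let X and Y be real vector spaces and let f : X → Y be an even function (f(−x) = f(x) for all x) satisfying the mixed functional equation (1.5). Then the function g : X → Y defined by g(x) = f(2x) − 16·f(x) is quadratic, and the function h : X → Y defined by h(x) = f(2x) − 4·f(x) is quartic; consequently f(x) = (1/12)·h(x) − (1/12)·g(x) is the sum of a quadratic and a quartic function. -/
open Filter Topology

theorem stmt_1 {X Y : Type*} [AddCommGroup X] [Module ℝ X] [AddCommGroup Y] [Module ℝ Y]
    (f : X → Y) (heven : ∀ x : X, f (-x) = f x) (hf : MixedEq f) :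
    IsQuadratic (fun x : X => f (2 • x) - 16 • f x) ∧
    IsQuartic (fun x : X => f (2 • x) - 4 • f x) ∧
    ∀ x : X, f x = (1 / 12 : ℝ) • (f (2 • x) - 4 • f x)
      - (1 / 12 : ℝ) • (f (2 • x) - 16 • f x) := by
  refine ⟨?_, ?_, fun x => by module⟩
  · intro x y
    simp only
    have h1 := hf 0 x
    rw [show (0:X) + 2 • x = 2 • x by module,
        show (0:X) - 2 • x = -(2 • x) by module,
        show (0:X) + x = x by module,
        show (0:X) - x = -x by module] at h1
    simp only [heven] at h1
    have h2 := hf 0 y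
    rw [show (0:X) + 2 • y = 2 • y by module,
        show (0:X) - 2 • y = -(2 • y) by module,
        show (0:X) + y = y by module,
        show (0:X) - y = -y by module] at h2
    simp only [heven] at h2
    have h3 := hf x x
    rw [show x + 2 • x = 3 • x by module,
        show x - 2 • x = -x by module,
        show x + x = 2 • x by module,
        show x - x = (0:X) by module] at h3
    simp only [heven] at h3
    have h4 := hf y x
    rw [show y + 2 • x = 2 • x + y by module,
        show y - 2 • x = -(2 • x - y) by module,
        show y + x = x + y by module,
        show y - x = -(x - y) by module] at h4
    simp only [heven] at h4
    have h5 := hf (2 • x) y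
    rw [show (2:ℕ) • (x + y) = 2 • x + 2 • y by module,
        show (2:ℕ) • (x - y) = 2 • x - 2 • y by module]
    linear_combination (norm := module) (-29/33 : ℝ) • h1 + (-1/3 : ℝ) • h2
      + (-20/11 : ℝ) • h3 + (4/3 : ℝ) • h4 + (1/3 : ℝ) • h5
  · intro x y
    simp only
    have h1 := hf 0 x
    rw [show (0:X) + 2 • x = 2 • x by module,
        show (0:X) - 2 • x = -(2 • x) by module,
        show (0:X) + x = x by module,
        show (0:X) - x = -x by module] at h1
    simp only [heven] at h1
    have h2 := hf 0 y
    rw [show (0:X) + 2 • y = 2 • y by module,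
        show (0:X) - 2 • y = -(2 • y) by module,
        show (0:X) + y = y by module,
        show (0:X) - y = -y by module] at h2
    simp only [heven] at h2
    have h3 := hf x x
    rw [show x + 2 • x = 3 • x by module,
        show x - 2 • x = -x by module,
        show x + x = 2 • x by module,
        show x - x = (0:X) by module] at h3
    simp only [heven] at h3
    have h4 := hf y x
    rw [show y + 2 • x = 2 • x + y by module,
        show y - 2 • x = -(2 • x - y) by module,
        show y + x = x + y by module,
        show y - x = -(x - y) by module] at h4
    simp only [heven] at h4
    have h5 := hf (2 • x) y
    have h6 := hf 0 (x + y)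
    rw [show (0:X) + 2 • (x + y) = 2 • x + 2 • y by module,
        show (0:X) - 2 • (x + y) = -(2 • x + 2 • y) by module,
        show (0:X) + (x + y) = x + y by module,
        show (0:X) - (x + y) = -(x + y) by module,
        show (3:ℕ) • (x + y) = 3 • x + 3 • y by module,
        show (2:ℕ) • (x + y) = 2 • x + 2 • y by module] at h6
    simp only [heven] at h6
    have h7 := hf 0 (x - y)
    rw [show (0:X) + 2 • (x - y) = 2 • x - 2 • y by module,
        show (0:X) - 2 • (x - y) = -(2 • x - 2 • y) by module,
        show (0:X) + (x - y) = x - y by module,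
        show (0:X) - (x - y) = -(x - y) by module,
        show (3:ℕ) • (x - y) = 3 • x - 3 • y by module,
        show (2:ℕ) • (x - y) = 2 • x - 2 • y by module] at h7
    simp only [heven] at h7
    have h8 := hf (x + y) x
    rw [show x + y + 2 • x = 3 • x + y by module,
        show x + y - 2 • x = -(x - y) by module,
        show x + y + x = 2 • x + y by module,
        show x + y - x = y by module] at h8
    simp only [heven] at h8
    have h9 := hf (x - y) x
    rw [show x - y + 2 • x = 3 • x - y by module,
        show x - y - 2 • x = -(x + y) by module,
        show x - y + x = 2 • x - y by module,
        show x - y - x = -y by module] at h9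
    simp only [heven] at h9
    have h10 := hf (2 • x) (x + y)
    rw [show (2:ℕ) • x + (2:ℕ) • (x + y) = (4:ℕ) • x + (2:ℕ) • y by module,
        show (2:ℕ) • x - (2:ℕ) • (x + y) = -((2:ℕ) • y) by module,
        show (2:ℕ) • x + (x + y) = (3:ℕ) • x + y by module,
        show (2:ℕ) • x - (x + y) = x - y by module,
        show (3:ℕ) • (x + y) = 3 • x + 3 • y by module,
        show (2:ℕ) • (x + y) = 2 • x + 2 • y by module] at h10
    simp only [heven] at h10
    have h11 := hf (2 • x) (x - y)
    rw [show (2:ℕ) • x + (2:ℕ) • (x - y) = (4:ℕ) • x - (2:ℕ) • y by module,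
        show (2:ℕ) • x - (2:ℕ) • (x - y) = (2:ℕ) • y by module,
        show (2:ℕ) • x + (x - y) = (3:ℕ) • x - y by module,
        show (2:ℕ) • x - (x - y) = x + y by module,
        show (3:ℕ) • (x - y) = 3 • x - 3 • y by module,
        show (2:ℕ) • (x - y) = 2 • x - 2 • y by module] at h11
    rw [show (2:ℕ) • (2 • x + y) = 4 • x + 2 • y by module,
        show (2:ℕ) • (2 • x - y) = 4 • x - 2 • y by module,
        show (2:ℕ) • (x + y) = 2 • x + 2 • y by module,
        show (2:ℕ) • (x - y) = 2 • x - 2 • y by module]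
    linear_combination (norm := module) (-32/11 : ℝ) • h1 + (2/3 : ℝ) • h2
      + (-48/11 : ℝ) • h3 + (4/3 : ℝ) • h4 + (-2/3 : ℝ) • h5
      + (-1/3 : ℝ) • h6 + (-1/3 : ℝ) • h7 + (4/3 : ℝ) • h8 + (4/3 : ℝ) • h9
      + (1/3 : ℝ) • h10 + (1/3 : ℝ) • h11
end

section
/- Let X and Y be real vector spaces and let f : X → Y be an odd function (f(−x) = −f(x) for all x) satisfying the mixed functional equation (1.5). Then f is cubic, i.e. f(2x+y)+f(2x−y) = 2·f(x+y)+2·f(x−y)+12·f(x) for all x, y ∈ X. -/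
open Filter Topology

theorem stmt_2 {X Y : Type*} [AddCommGroup X] [Module ℝ X] [AddCommGroup Y] [Module ℝ Y]
    (f : X → Y) (hodd : ∀ x : X, f (-x) = -f x) (hf : MixedEq f) :
    IsCubic f := by
  unfold MixedEq at hf
  unfold IsCubic
  have cancel : ∀ (n : ℝ) (a b : Y), n ≠ 0 → n • a = n • b → a = b := by
    intro n a b hn h
    have := congrArg (fun z : Y => n⁻¹ • z) h
    simpa [smul_smul, inv_mul_cancel₀ hn] using this
  have h0 : f 0 = 0 := by
    have h := hodd 0
    rw [neg_zero] at h
    have h2 : (2:ℝ) • f 0 = (2:ℝ) • (0:Y) := by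
      rw [two_smul]; nth_rewrite 2 [h]; simp
    exact cancel 2 _ _ (by norm_num) h2
  have ha : ∀ y : X, 4 • f (3 • y) = 18 • f (2 • y) - 36 • f y := by
    intro y
    have h := hf 0 y
    simp only [zero_add, zero_sub, hodd, h0] at h
    linear_combination (norm := module) -h
  have hb : ∀ x : X, 3 • f (3 • x) = 18 • f (2 • x) - 63 • f x := by
    intro x
    have h := hf x x
    rw [show x + 2 • x = (3:ℕ) • x from by abel, show x - 2 • x = -x from by abel,
        show x + x = (2:ℕ) • x from by abel, sub_self, hodd, h0] at h
    linear_combination (norm := module) (-3:ℝ) • h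
  have h2 : ∀ x : X, f (2 • x) = (8:ℝ) • f x := by
    intro x
    have h : (18:ℝ) • f (2 • x) = (18:ℝ) • ((8:ℝ) • f x) := by
      linear_combination (norm := module) (3:ℝ) • ha x - (4:ℝ) • hb x
    exact cancel 18 _ _ (by norm_num) h
  have h3 : ∀ x : X, f (3 • x) = (27:ℝ) • f x := by
    intro x
    have h : (3:ℝ) • f (3 • x) = (3:ℝ) • ((27:ℝ) • f x) := by
      linear_combination (norm := module) hb x + (18:ℝ) • h2 x
    exact cancel 3 _ _ (by norm_num) h
  intro x y
  have h := hf (2 • x) y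
  rw [show (2:ℕ) • x + 2 • y = (2:ℕ) • (x + y) from by abel,
      show (2:ℕ) • x - 2 • y = (2:ℕ) • (x - y) from by abel,
      h2 (x+y), h2 (x-y), h2 x, h3 y, h2 y] at h
  have h12 : (12:ℝ) • (f (2 • x + y) + f (2 • x - y)) =
      (12:ℝ) • (2 • f (x + y) + 2 • f (x - y) + 12 • f x) := by
    linear_combination (norm := module) (-1:ℝ) • h
  exact cancel 12 _ _ (by norm_num) h12
end

section
/- Let X and Y be real vector spaces and let f : X → Y be an odd function satisfying the mixed functional equation (1.5). Then f(2x) = 8·f(x) for all x ∈ X. -/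
open Filter Topology

theorem stmt_3 {X Y : Type*} [AddCommGroup X] [Module ℝ X] [AddCommGroup Y] [Module ℝ Y]
    (f : X → Y) (hodd : ∀ x : X, f (-x) = -f x) (hf : MixedEq f) :
    ∀ x : X, f (2 • x) = 8 • f x := by
  intro x
  have h0 : f 0 = 0 := by
    have h := hodd 0
    rw [neg_zero] at h
    have h2 : (2 : ℝ) • f 0 = 0 := by
      rw [two_smul]; nth_rewrite 2 [h]; exact add_neg_cancel _
    rcases smul_eq_zero.mp h2 with h' | h'
    · norm_num at h'
    · exact h'
  have e1 : x + 2 • x = 3 • x := by module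
  have e2 : x - 2 • x = -x := by module
  have e3 : x + x = 2 • x := (two_smul ℕ x).symm
  have hA := hf 0 x
  have hB := hf x x
  rw [zero_add, zero_sub, zero_add, zero_sub, hodd, hodd, h0] at hA
  rw [e1, e2, e3, sub_self, hodd, h0] at hB
  simp only [← Nat.cast_smul_eq_nsmul ℝ] at hA hB ⊢
  push_cast at hA hB ⊢
  linear_combination (norm := module) ((2:ℝ)/3) • hB - ((1:ℝ)/6) • hA
end

section
/- Let X and Y be real vector spaces and let f : X → Y be an even function satisfying the mixed functional equation (1.5). Then f(3y) = 6·f(2y) − 15·f(y) for all y ∈ X, and f(x+2y)+f(x−2y) = 4·f(x+y)+4·f(x−y)−8·f(y)+2·f(2y)−6·f(x) for all x, y ∈ X. -/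
open Filter Topology

theorem stmt_4 {X Y : Type*} [AddCommGroup X] [Module ℝ X] [AddCommGroup Y] [Module ℝ Y]
    (f : X → Y) (heven : ∀ x : X, f (-x) = f x) (hf : MixedEq f) :
    (∀ y : X, f (3 • y) = 6 • f (2 • y) - 15 • f y) ∧
    (∀ x y : X, f (x + 2 • y) + f (x - 2 • y) =
      4 • f (x + y) + 4 • f (x - y) - 8 • f y + 2 • f (2 • y) - 6 • f x) := by
  have h0 : f 0 = 0 := by
    have h := hf 0 0
    simp only [smul_zero, add_zero, zero_add, sub_zero] at h
    simp only [← Nat.cast_smul_eq_nsmul ℝ] at h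
    push_cast at h
    linear_combination (norm := module) ((-1 : ℝ)/22) • h
  have h3 : ∀ y : X, f (3 • y) = 6 • f (2 • y) - 15 • f y := by
    intro y
    have h := hf 0 y
    simp only [zero_add, zero_sub, heven, h0, smul_zero, sub_zero] at h
    simp only [← Nat.cast_smul_eq_nsmul ℝ] at h ⊢
    push_cast at h ⊢
    linear_combination (norm := module) ((-1 : ℝ)/4) • h
  refine ⟨h3, fun x y => ?_⟩
  have h := hf x y
  have h3y := h3 y
  simp only [← Nat.cast_smul_eq_nsmul ℝ] at h h3y ⊢
  push_cast at h h3y ⊢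
  linear_combination (norm := module) ((1 : ℝ)/3) • h + ((4 : ℝ)/3) • h3y
end

section
/- Let X and Y be real vector spaces and let f : X → Y be an even function satisfying the mixed functional equation (1.5). Then f(4x) = 20·f(2x) − 64·f(x) for all x ∈ X. -/
open Filter Topology

theorem stmt_5 {X Y : Type*} [AddCommGroup X] [Module ℝ X] [AddCommGroup Y] [Module ℝ Y]
    (f : X → Y) (heven : ∀ x : X, f (-x) = f x) (hf : MixedEq f) :
    ∀ x : X, f (4 • x) = 20 • f (2 • x) - 64 • f x := by
  intro x
  have e1 : (2:ℕ) • x + 2 • x = 4 • x := by rw [← add_nsmul]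
  have e2 : (2:ℕ) • x + x = 3 • x := by rw [← succ_nsmul]
  have e3 : (2:ℕ) • x - x = x := by rw [two_nsmul, add_sub_cancel_right]
  have h0 := hf 0 0
  have h1 := hf 0 x
  have h2 := hf (2 • x) x
  simp only [smul_zero, add_zero, zero_add, zero_sub, sub_self, heven, e1, e2, e3] at h0 h1 h2
  linear_combination (norm := module) (1/3 : ℝ) • h2 - (4/3 : ℝ) • h1 - (23/22 : ℝ) • h0
end

section
/- Let X be a real vector space, Y a real Banach space, and let f : X → Y be an odd function with ‖D_f(x,y)‖ ≤ φ(x,y) for all x, y ∈ X, where φ : X × X → [0,∞) satisfies: the series ∑_{i=1}^∞ 8^{-i}·(φ(2^i x, 2^i y) + 4·φ(0, 2^i x)) converges for all x, y ∈ X, and lim_{n→∞} 8^{-n}·φ(2^n x, 2^n y) = 0 for all x, y ∈ X. Then for each x ∈ X the limit C(x) := lim_{n→∞} 8^{-n}·f(2^n x) exists, C : X → Y is a cubic function satisfying the mixed functional equation (1.5), ‖f(x) − C(x)‖ ≤ (1/6)·∑_{i=0}^∞ 8^{-(i+1)}·φ(0, 2^i x) + (4/6)·∑_{i=0}^∞ 8^{-(i+1)}·φ(2^i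 x, 2^i x) for all x ∈ X, and C is the unique cubic function satisfying (1.5) and this inequality. -/
open Filter Topology

set_option linter.unusedSectionVars false
set_option maxHeartbeats 1000000

section Aux
variable {X Y : Type*} [AddCommGroup X] [Module ℝ X] [AddCommGroup Y] [Module ℝ Y]

lemma aux_f0 (f : X → Y) (hodd : ∀ x : X, f (-x) = -f x) : f 0 = 0 := by
  have h := hodd 0
  rw [neg_zero] at h
  have h2 : (2:ℝ) • f 0 = 0 := by rw [two_smul]; nth_rewrite 2 [h]; simp
  simpa using (smul_eq_zero.mp h2).resolve_left (by norm_num)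

lemma aux_key (f : X → Y) (hodd : ∀ x : X, f (-x) = -f x) (y : X) :
    (6:ℕ) • f (2 • y) = (48:ℕ) • f y + 4 • Dop f y y - Dop f 0 y := by
  have hf0 := aux_f0 f hodd
  have e1 : y + 2 • y = 3 • y := by abel
  have e2 : y - 2 • y = -y := by abel
  have e3 : y + y = 2 • y := by abel
  have e4 : y - y = (0:X) := by abel
  have e5 : (0:X) + 2 • y = 2 • y := by abel
  have e6 : (0:X) - 2 • y = -(2 • y) := by abel
  have e7 : (0:X) + y = y := by abel
  have e8 : (0:X) - y = -y := by abel
  simp only [Dop, e1, e2, e3, e4, e5, e6, e7, e8, hodd, hf0]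
  abel

lemma aux_key' (f : X → Y) (hodd : ∀ x : X, f (-x) = -f x) (y : X) :
    f (2 • y) - (8:ℝ) • f y = (6:ℝ)⁻¹ • ((4:ℝ) • Dop f y y - Dop f 0 y) := by
  have h := aux_key f hodd y
  rw [← Nat.cast_smul_eq_nsmul ℝ 6, ← Nat.cast_smul_eq_nsmul ℝ 48,
      ← Nat.cast_smul_eq_nsmul ℝ 4] at h
  push_cast at h
  linear_combination (norm := module) (6:ℝ)⁻¹ • h

lemma cubic_of_mixed (C : X → Y) (hodd : ∀ x : X, C (-x) = -C x) (hM : MixedEq C) :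
    IsCubic C := by
  have hC0 : C 0 = 0 := aux_f0 C hodd
  have hM' : ∀ x y : X, (3:ℝ) • (C (x + (2:ℝ) • y) + C (x - (2:ℝ) • y)) =
      (12:ℝ) • (C (x + y) + C (x - y)) + (4:ℝ) • C ((3:ℝ) • y) - (18:ℝ) • C ((2:ℝ) • y)
        + (36:ℝ) • C y - (18:ℝ) • C x := by
    intro x y
    have h := hM x y
    simp only [← Nat.cast_smul_eq_nsmul ℝ] at h
    push_cast at h
    exact h
  have h2 : ∀ y : X, C ((2:ℝ) • y) = (8:ℝ) • C y := by
    intro y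
    have h0 := hM' 0 y
    simp only [zero_add, zero_sub, hodd, hC0] at h0
    have hyy := hM' y y
    have e1 : y + (2:ℝ) • y = (3:ℝ) • y := by module
    have e2 : y - (2:ℝ) • y = -y := by module
    have e3 : y + y = (2:ℝ) • y := by module
    have e4 : y - y = (0:X) := by abel
    rw [e1, e2, e3, e4, hodd, hC0] at hyy
    linear_combination (norm := module) (-(6:ℝ)⁻¹) • h0 + (2/3 : ℝ) • hyy
  have hE : ∀ x y : X, C (x + (2:ℝ) • y) + C (x - (2:ℝ) • y) =
      (4:ℝ) • C (x + y) + (4:ℝ) • C (x - y) - (6:ℝ) • C x := by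
    intro x y
    have h := hM' x y
    have hyy := hM' y y
    have e1 : y + (2:ℝ) • y = (3:ℝ) • y := by module
    have e2 : y - (2:ℝ) • y = -y := by module
    have e3 : y + y = (2:ℝ) • y := by module
    have e4 : y - y = (0:X) := by abel
    rw [e1, e2, e3, e4, hodd, hC0] at hyy
    linear_combination (norm := module) (3:ℝ)⁻¹ • h + (-(4/3) : ℝ) • hyy + (2:ℝ) • h2 y
  intro x y
  simp only [← Nat.cast_smul_eq_nsmul ℝ]
  push_cast
  have h := hE ((2:ℝ) • x) y
  have e1 : (2:ℝ) • x + (2:ℝ) • y = (2:ℝ) • (x + y) := by module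
  have e2 : (2:ℝ) • x - (2:ℝ) • y = (2:ℝ) • (x - y) := by module
  rw [e1, e2, h2 (x + y), h2 (x - y), h2 x] at h
  linear_combination (norm := module) (-(4:ℝ)⁻¹) • h

lemma Dop_scale (f : X → Y) (c : ℝ) (k : ℕ) (x y : X) :
    Dop (fun z => c • f (k • z)) x y = c • Dop f (k • x) (k • y) := by
  have e1 : k • (x + 2 • y) = k • x + 2 • (k • y) := by
    rw [smul_add, smul_smul, smul_smul, Nat.mul_comm]
  have e2 : k • (x - 2 • y) = k • x - 2 • (k • y) := by
    rw [smul_sub, smul_smul, smul_smul, Nat.mul_comm]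
  have e3 : k • (x + y) = k • x + k • y := smul_add k x y
  have e4 : k • (x - y) = k • x - k • y := smul_sub k x y
  have e5 : k • ((3:ℕ) • y) = 3 • (k • y) := by rw [smul_smul, smul_smul, Nat.mul_comm]
  have e6 : k • ((2:ℕ) • y) = 2 • (k • y) := by rw [smul_smul, smul_smul, Nat.mul_comm]
  simp only [Dop, e1, e2, e3, e4, e5, e6]
  simp only [← Nat.cast_smul_eq_nsmul ℝ]
  push_cast
  module

lemma cubic_double (c : X → Y) (hc : IsCubic c) (x : X) : c (2 • x) = (8:ℝ) • c x := by
  have h := hc x 0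
  simp only [add_zero, sub_zero] at h
  rw [← Nat.cast_smul_eq_nsmul ℝ 2 (c x), ← Nat.cast_smul_eq_nsmul ℝ 12] at h
  push_cast at h
  linear_combination (norm := module) (2:ℝ)⁻¹ • h

lemma cubic_pow (c : X → Y) (hc : IsCubic c) (x : X) (n : ℕ) :
    c ((2 ^ n : ℕ) • x) = ((8:ℝ) ^ n) • c x := by
  induction n with
  | zero => simp
  | succ n ih =>
    have e : ((2 ^ (n+1) : ℕ)) • x = (2:ℕ) • ((2 ^ n : ℕ) • x) := by
      rw [smul_smul, ← pow_succ']
    rw [e, cubic_double c hc, ih, smul_smul, ← pow_succ']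

end Aux

theorem stmt_6 {X Y : Type*} [AddCommGroup X] [Module ℝ X]
    [NormedAddCommGroup Y] [NormedSpace ℝ Y] [CompleteSpace Y]
    (f : X → Y) (hodd : ∀ x : X, f (-x) = -f x)
    (φ : X → X → ℝ) (hφ0 : ∀ x y : X, 0 ≤ φ x y)
    (hbd : ∀ x y : X, ‖Dop f x y‖ ≤ φ x y)
    (hsum : ∀ x y : X, Summable fun i : ℕ =>
      ((8 : ℝ) ^ (i + 1))⁻¹ *
        (φ ((2 ^ (i + 1) : ℕ) • x) ((2 ^ (i + 1) : ℕ) • y) + 4 * φ 0 ((2 ^ (i + 1) : ℕ) • x)))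
    (hlim : ∀ x y : X, Tendsto
      (fun n : ℕ => ((8 : ℝ) ^ n)⁻¹ * φ ((2 ^ n : ℕ) • x) ((2 ^ n : ℕ) • y)) atTop (𝓝 0)) :
    ∃ C : X → Y,
      (∀ x : X, Tendsto (fun n : ℕ => ((8 : ℝ) ^ n)⁻¹ • f ((2 ^ n : ℕ) • x)) atTop (𝓝 (C x))) ∧
      IsCubic C ∧ MixedEq C ∧
      (∀ x : X, ‖f x - C x‖ ≤
        (1 / 6) * ∑' i : ℕ, ((8 : ℝ) ^ (i + 1))⁻¹ * φ 0 ((2 ^ i : ℕ) • x) +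
        (4 / 6) * ∑' i : ℕ, ((8 : ℝ) ^ (i + 1))⁻¹ * φ ((2 ^ i : ℕ) • x) ((2 ^ i : ℕ) • x)) ∧
      (∀ C' : X → Y, IsCubic C' → MixedEq C' →
        (∀ x : X, ‖f x - C' x‖ ≤
          (1 / 6) * ∑' i : ℕ, ((8 : ℝ) ^ (i + 1))⁻¹ * φ 0 ((2 ^ i : ℕ) • x) +
          (4 / 6) * ∑' i : ℕ, ((8 : ℝ) ^ (i + 1))⁻¹ * φ ((2 ^ i : ℕ) • x) ((2 ^ i : ℕ) • x)) →
        C' = C) := by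
  classical
  -- contraction estimate
  have hcontr : ∀ y : X, ‖f ((2:ℕ) • y) - (8:ℝ) • f y‖ ≤ 6⁻¹ * (φ 0 y + 4 * φ y y) := by
    intro y
    rw [aux_key' f hodd y, norm_smul]
    have h1 : ‖(4:ℝ) • Dop f y y - Dop f 0 y‖ ≤ 4 * φ y y + φ 0 y := by
      refine (norm_sub_le _ _).trans ?_
      rw [norm_smul]
      have h4 : ‖(4:ℝ)‖ = 4 := by norm_num
      rw [h4]
      gcongr
      · exact hbd y y
      · exact hbd 0 y
    have h6 : ‖(6:ℝ)⁻¹‖ = 6⁻¹ := by norm_num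
    rw [h6]
    linarith
  -- step estimate
  have hstep : ∀ (x : X) (n : ℕ),
      dist (((8:ℝ)^n)⁻¹ • f ((2^n:ℕ) • x)) (((8:ℝ)^(n+1))⁻¹ • f ((2^(n+1):ℕ) • x)) ≤
        ((8:ℝ)^(n+1))⁻¹ * (6⁻¹ * (φ 0 ((2^n:ℕ)•x) + 4 * φ ((2^n:ℕ)•x) ((2^n:ℕ)•x))) := by
    intro x n
    rw [dist_eq_norm]
    have e : ((2^(n+1):ℕ)) • x = (2:ℕ) • ((2^n:ℕ) • x) := by rw [smul_smul, ← pow_succ']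
    rw [e]
    have h8 : ((8:ℝ)^(n+1))⁻¹ * 8 = ((8:ℝ)^n)⁻¹ := by
      rw [pow_succ]
      have : ((8:ℝ)^n) ≠ 0 := by positivity
      field_simp
    have e2 : ((8:ℝ)^n)⁻¹ • f ((2^n:ℕ)•x) - ((8:ℝ)^(n+1))⁻¹ • f ((2:ℕ) • ((2^n:ℕ)•x)) =
        ((8:ℝ)^(n+1))⁻¹ • ((8:ℝ) • f ((2^n:ℕ)•x) - f ((2:ℕ)•((2^n:ℕ)•x))) := by
      rw [smul_sub, smul_smul (((8:ℝ)^(n+1))⁻¹) (8:ℝ), h8]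
    rw [e2, norm_smul]
    have h9 : ‖((8:ℝ)^(n+1))⁻¹‖ = ((8:ℝ)^(n+1))⁻¹ := by
      rw [Real.norm_eq_abs, abs_of_pos (by positivity)]
    rw [h9]
    gcongr
    rw [← norm_neg]
    have e3 : -((8:ℝ) • f ((2^n:ℕ)•x) - f ((2:ℕ)•((2^n:ℕ)•x))) =
        f ((2:ℕ)•((2^n:ℕ)•x)) - (8:ℝ) • f ((2^n:ℕ)•x) := by abel
    rw [e3]
    exact hcontr ((2^n:ℕ)•x)
  -- summabilities
  have hA : ∀ x : X, Summable (fun i : ℕ => ((8:ℝ)^(i+1))⁻¹ * φ 0 ((2^i:ℕ)•x)) := by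
    intro x
    refine (summable_nat_add_iff 1).mp ?_
    refine Summable.of_nonneg_of_le (fun i => mul_nonneg (by positivity) (hφ0 _ _)) (fun i => ?_) (hsum x x)
    have h1 : ((8:ℝ)^(i+1+1))⁻¹ ≤ ((8:ℝ)^(i+1))⁻¹ := by
      apply inv_anti₀ (by positivity)
      apply pow_le_pow_right₀ (by norm_num)
      omega
    have h2 : φ 0 ((2^(i+1):ℕ)•x) ≤
        φ ((2^(i+1):ℕ)•x) ((2^(i+1):ℕ)•x) + 4 * φ 0 ((2^(i+1):ℕ)•x) := by
      have := hφ0 ((2^(i+1):ℕ)•x) ((2^(i+1):ℕ)•x)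
      have := hφ0 0 ((2^(i+1):ℕ)•x)
      linarith
    exact mul_le_mul h1 h2 (hφ0 _ _) (by positivity)
  have hB : ∀ x : X, Summable (fun i : ℕ => ((8:ℝ)^(i+1))⁻¹ * φ ((2^i:ℕ)•x) ((2^i:ℕ)•x)) := by
    intro x
    refine (summable_nat_add_iff 1).mp ?_
    refine Summable.of_nonneg_of_le (fun i => mul_nonneg (by positivity) (hφ0 _ _)) (fun i => ?_) (hsum x x)
    have h1 : ((8:ℝ)^(i+1+1))⁻¹ ≤ ((8:ℝ)^(i+1))⁻¹ := by
      apply inv_anti₀ (by positivity)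
      apply pow_le_pow_right₀ (by norm_num)
      omega
    have h2 : φ ((2^(i+1):ℕ)•x) ((2^(i+1):ℕ)•x) ≤
        φ ((2^(i+1):ℕ)•x) ((2^(i+1):ℕ)•x) + 4 * φ 0 ((2^(i+1):ℕ)•x) := by
      have := hφ0 0 ((2^(i+1):ℕ)•x)
      linarith
    exact mul_le_mul h1 h2 (hφ0 _ _) (by positivity)
  have hD : ∀ x : X, Summable (fun n : ℕ =>
      ((8:ℝ)^(n+1))⁻¹ * (6⁻¹ * (φ 0 ((2^n:ℕ)•x) + 4 * φ ((2^n:ℕ)•x) ((2^n:ℕ)•x)))) := by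
    intro x
    have := ((hA x).mul_left 6⁻¹).add ((hB x).mul_left (4 * 6⁻¹))
    refine this.congr fun n => by ring
  -- limit exists
  have hconv : ∀ x : X, ∃ L : Y,
      Tendsto (fun n : ℕ => ((8:ℝ)^n)⁻¹ • f ((2^n:ℕ) • x)) atTop (𝓝 L) := fun x =>
    cauchySeq_tendsto_of_complete
      (cauchySeq_of_dist_le_of_summable _ (hstep x) (hD x))
  choose C hC using hconv
  -- bound
  have hbound : ∀ x : X, ‖f x - C x‖ ≤
      (1 / 6) * ∑' i : ℕ, ((8:ℝ)^(i+1))⁻¹ * φ 0 ((2^i:ℕ) • x) +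
      (4 / 6) * ∑' i : ℕ, ((8:ℝ)^(i+1))⁻¹ * φ ((2^i:ℕ) • x) ((2^i:ℕ) • x) := by
    intro x
    have h0 := dist_le_tsum_of_dist_le_of_tendsto₀ _ (hstep x) (hD x) (hC x)
    simp only [pow_zero, inv_one, one_smul, one_nsmul] at h0
    rw [dist_eq_norm] at h0
    have e : (∑' n : ℕ, ((8:ℝ)^(n+1))⁻¹ *
        (6⁻¹ * (φ 0 ((2^n:ℕ)•x) + 4 * φ ((2^n:ℕ)•x) ((2^n:ℕ)•x)))) =
        (1 / 6) * ∑' i : ℕ, ((8:ℝ)^(i+1))⁻¹ * φ 0 ((2^i:ℕ) • x) +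
        (4 / 6) * ∑' i : ℕ, ((8:ℝ)^(i+1))⁻¹ * φ ((2^i:ℕ) • x) ((2^i:ℕ) • x) := by
      rw [← tsum_mul_left, ← tsum_mul_left,
        ← Summable.tsum_add ((hA x).mul_left (1/6)) ((hB x).mul_left (4/6))]
      exact tsum_congr fun n => by ring
    rw [e] at h0
    exact h0
  -- C is odd
  have hCodd : ∀ x : X, C (-x) = -C x := by
    intro x
    have h1 : Tendsto (fun n : ℕ => ((8:ℝ)^n)⁻¹ • f ((2^n:ℕ) • (-x))) atTop (𝓝 (-C x)) := by
      refine Tendsto.congr (fun n => ?_) (hC x).neg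
      rw [smul_neg, hodd, smul_neg]
    exact tendsto_nhds_unique (hC (-x)) h1
  -- Dop C = 0
  have hMC : ∀ x y : X, Dop C x y = 0 := by
    intro x y
    have heq : ∀ n : ℕ, ((8:ℝ)^n)⁻¹ • Dop f ((2^n:ℕ)•x) ((2^n:ℕ)•y) =
        Dop (fun z => ((8:ℝ)^n)⁻¹ • f ((2^n:ℕ)•z)) x y := fun n =>
      (Dop_scale f (((8:ℝ)^n)⁻¹) (2^n) x y).symm
    have h1 : Tendsto (fun n : ℕ => ((8:ℝ)^n)⁻¹ • Dop f ((2^n:ℕ)•x) ((2^n:ℕ)•y))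
        atTop (𝓝 (Dop C x y)) := by
      refine Tendsto.congr (fun n => (heq n).symm) ?_
      simp only [Dop]
      exact ((((((hC (x+2•y)).add (hC (x-2•y))).const_smul (3:ℕ)).sub
        (((hC (x+y)).add (hC (x-y))).const_smul (12:ℕ))).sub
        ((hC (3•y)).const_smul (4:ℕ))).add
        ((hC (2•y)).const_smul (18:ℕ))).sub ((hC y).const_smul (36:ℕ)) |>.add
        ((hC x).const_smul (18:ℕ))
    have h2 : Tendsto (fun n : ℕ => ((8:ℝ)^n)⁻¹ • Dop f ((2^n:ℕ)•x) ((2^n:ℕ)•y))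
        atTop (𝓝 0) := by
      refine squeeze_zero_norm (fun n => ?_) (hlim x y)
      rw [norm_smul]
      have h9 : ‖((8:ℝ)^n)⁻¹‖ = ((8:ℝ)^n)⁻¹ := by
        rw [Real.norm_eq_abs, abs_of_pos (by positivity)]
      rw [h9]
      exact mul_le_mul_of_nonneg_left (hbd _ _) (by positivity)
    exact tendsto_nhds_unique h1 h2
  have hMixC : MixedEq C := by
    intro x y
    have e : 3 • (C (x + 2 • y) + C (x - 2 • y)) -
        (12 • (C (x + y) + C (x - y)) + 4 • C (3 • y) - 18 • C (2 • y) + 36 • C y - 18 • C x) =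
        Dop C x y := by rw [Dop]; abel
    rw [← sub_eq_zero, e]
    exact hMC x y
  have hCubic : IsCubic C := cubic_of_mixed C hCodd hMixC
  refine ⟨C, hC, hCubic, hMixC, hbound, ?_⟩
  -- uniqueness
  intro C' hC'c hC'm hC'b
  funext x
  have hscale : ∀ n : ℕ, C' x - C x =
      ((8:ℝ)^n)⁻¹ • (C' ((2^n:ℕ)•x) - C ((2^n:ℕ)•x)) := by
    intro n
    rw [cubic_pow C' hC'c x n, cubic_pow C hCubic x n, smul_sub, smul_smul, smul_smul,
      inv_mul_cancel₀ (by positivity : ((8:ℝ)^n) ≠ 0), one_smul, one_smul]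
  have key : ∀ n : ℕ, ‖C' x - C x‖ ≤ 2 * (((8:ℝ)^n)⁻¹ *
      ((1 / 6) * ∑' i : ℕ, ((8:ℝ)^(i+1))⁻¹ * φ 0 ((2^i:ℕ) • ((2^n:ℕ)•x)) +
       (4 / 6) * ∑' i : ℕ, ((8:ℝ)^(i+1))⁻¹ *
         φ ((2^i:ℕ) • ((2^n:ℕ)•x)) ((2^i:ℕ) • ((2^n:ℕ)•x)))) := by
    intro n
    rw [hscale n, norm_smul]
    have h9 : ‖((8:ℝ)^n)⁻¹‖ = ((8:ℝ)^n)⁻¹ := by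
      rw [Real.norm_eq_abs, abs_of_pos (by positivity)]
    rw [h9]
    set z := (2^n:ℕ)•x with hzdef
    set Φ : ℝ := (1 / 6) * ∑' i : ℕ, ((8:ℝ)^(i+1))⁻¹ * φ 0 ((2^i:ℕ) • z) +
       (4 / 6) * ∑' i : ℕ, ((8:ℝ)^(i+1))⁻¹ * φ ((2^i:ℕ) • z) ((2^i:ℕ) • z) with hPhi
    have hzb : ‖C' z - C z‖ ≤ 2 * Φ := by
      have tri : ‖C' z - C z‖ ≤ ‖f z - C z‖ + ‖f z - C' z‖ := by
        rw [show C' z - C z = (f z - C z) - (f z - C' z) from by abel]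
        exact norm_sub_le _ _
      have b1 := hC'b z
      have b2 := hbound z
      rw [← hPhi] at b1 b2
      linarith
    calc ((8:ℝ)^n)⁻¹ * ‖C' z - C z‖ ≤ ((8:ℝ)^n)⁻¹ * (2 * Φ) :=
          mul_le_mul_of_nonneg_left hzb (by positivity)
      _ = 2 * (((8:ℝ)^n)⁻¹ * Φ) := by ring
  -- the bound tends to zero
  have ht1 : Tendsto (fun n : ℕ => ((8:ℝ)^n)⁻¹ *
      ∑' i : ℕ, ((8:ℝ)^(i+1))⁻¹ * φ 0 ((2^i:ℕ) • ((2^n:ℕ)•x))) atTop (𝓝 0) := by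
    have heq : ∀ n : ℕ, ((8:ℝ)^n)⁻¹ *
        ∑' i : ℕ, ((8:ℝ)^(i+1))⁻¹ * φ 0 ((2^i:ℕ) • ((2^n:ℕ)•x)) =
        ∑' i : ℕ, (fun j : ℕ => ((8:ℝ)^(j+1))⁻¹ * φ 0 ((2^j:ℕ)•x)) (i + n) := by
      intro n
      rw [← tsum_mul_left]
      refine tsum_congr fun i => ?_
      have e : (2^i:ℕ) • ((2^n:ℕ)•x) = (2^(i+n):ℕ) • x := by
        rw [smul_smul, ← pow_add]
      rw [e, ← mul_assoc, ← mul_inv, ← pow_add,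
        show n + (i+1) = i + n + 1 from by omega]
    exact Tendsto.congr (fun n => (heq n).symm)
      (tendsto_sum_nat_add (fun j : ℕ => ((8:ℝ)^(j+1))⁻¹ * φ 0 ((2^j:ℕ)•x)))
  have ht2 : Tendsto (fun n : ℕ => ((8:ℝ)^n)⁻¹ *
      ∑' i : ℕ, ((8:ℝ)^(i+1))⁻¹ *
        φ ((2^i:ℕ) • ((2^n:ℕ)•x)) ((2^i:ℕ) • ((2^n:ℕ)•x))) atTop (𝓝 0) := by
    have heq : ∀ n : ℕ, ((8:ℝ)^n)⁻¹ *
        ∑' i : ℕ, ((8:ℝ)^(i+1))⁻¹ *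
          φ ((2^i:ℕ) • ((2^n:ℕ)•x)) ((2^i:ℕ) • ((2^n:ℕ)•x)) =
        ∑' i : ℕ, (fun j : ℕ => ((8:ℝ)^(j+1))⁻¹ * φ ((2^j:ℕ)•x) ((2^j:ℕ)•x)) (i + n) := by
      intro n
      rw [← tsum_mul_left]
      refine tsum_congr fun i => ?_
      have e : (2^i:ℕ) • ((2^n:ℕ)•x) = (2^(i+n):ℕ) • x := by
        rw [smul_smul, ← pow_add]
      rw [e, ← mul_assoc, ← mul_inv, ← pow_add,
        show n + (i+1) = i + n + 1 from by omega]
    exact Tendsto.congr (fun n => (heq n).symm)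
      (tendsto_sum_nat_add (fun j : ℕ => ((8:ℝ)^(j+1))⁻¹ * φ ((2^j:ℕ)•x) ((2^j:ℕ)•x)))
  have hT : Tendsto (fun n : ℕ => 2 * (((8:ℝ)^n)⁻¹ *
      ((1 / 6) * ∑' i : ℕ, ((8:ℝ)^(i+1))⁻¹ * φ 0 ((2^i:ℕ) • ((2^n:ℕ)•x)) +
       (4 / 6) * ∑' i : ℕ, ((8:ℝ)^(i+1))⁻¹ *
         φ ((2^i:ℕ) • ((2^n:ℕ)•x)) ((2^i:ℕ) • ((2^n:ℕ)•x))))) atTop (𝓝 0) := by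
    have := ((ht1.const_mul (1/6:ℝ)).add (ht2.const_mul (4/6:ℝ))).const_mul (2:ℝ)
    simp only [mul_zero, add_zero] at this
    refine this.congr fun n => by ring
  have hle : ‖C' x - C x‖ ≤ 0 := ge_of_tendsto' hT key
  have := norm_le_zero_iff.mp hle
  exact sub_eq_zero.mp this
end

section
/- Let X be a real vector space, Y a real Banach space, and let f : X → Y be an odd function with ‖D_f(x,y)‖ ≤ φ(x,y) for all x, y ∈ X, where φ : X × X → [0,∞) satisfies: the series ∑_{i=1}^∞ 8^i·(φ(x/2^i, y/2^i) + 4·φ(0, x/2^i)) converges for all x, y ∈ X, and lim_{n→∞} 8^n·φ(x/2^n, y/2^n) = 0 for all x, y ∈ X. Then for each x ∈ X the limit C(x) := lim_{n→∞} 8^n·f(x/2^n) exists, C : X → Y is a cubic function satisfying the mixed functional equation (1.5), ‖f(x) − C(x)‖ ≤ (1/6)·∑_{i=1}^∞ 8^{i-1}·φ(0, x/2^i) + (4/6)·∑_{i=1}^∞ 8^{i-1}·φ(x/2^i, x/2^i) for all x ∈ X, and C is the unique cubic function satisfying (1.5) and this inequality. -/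
open Filter Topology

/-
Oddness gives `4 D_f(t,t) - D_f(0,t) = 6 (f (2t) - 8 f t)`, so `f` satisfies `f (2t) = 8 f t`
up to `(φ(0,t) + 4 φ(t,t)) / 6`. Hyers' direct method then makes `8ⁿ f (x / 2ⁿ)` Cauchy; its
limit `C` lies within the stated series of `f`, and `D_C = 0` because `8ⁿ φ (x / 2ⁿ, y / 2ⁿ) → 0`.
An odd solution of (1.5) has `C (2x) = 8 C x` and `C (3x) = 27 C x`, which turn `D_C(2x, y) = 0`
into the cubic equation. Two cubic maps within that bound of `f` differ at `x` by `8ⁿ` times their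
difference at `x / 2ⁿ`, hence by at most twice a tail of a convergent series.
-/

section Algebra

variable {X Y : Type*} [AddCommGroup X] [AddCommGroup Y]

theorem mixedEq_iff_forall_Dop_eq_zero (f : X → Y) : MixedEq f ↔ ∀ x y, Dop f x y = 0 := by
  refine forall₂_congr fun x y => ?_
  rw [Dop, ← sub_eq_zero]
  constructor <;> intro h <;> rw [← h] <;> abel

theorem Dop_self_of_odd {h : X → Y} (hodd : ∀ x, h (-x) = -h x) (h0 : h 0 = 0) (t : X) :
    Dop h t t = 6 • h (2 • t) - h (3 • t) - 21 • h t := by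
  have h3 : t + 2 • t = 3 • t := by abel
  have hm : t - 2 • t = -t := by abel
  simp only [Dop, h3, hm, ← two_nsmul, sub_self, hodd, h0]
  abel

theorem Dop_zero_left_of_odd {h : X → Y} (hodd : ∀ x, h (-x) = -h x) (h0 : h 0 = 0) (t : X) :
    Dop h 0 t = 18 • h (2 • t) - 4 • h (3 • t) - 36 • h t := by
  simp only [Dop, zero_add, zero_sub, hodd, h0]
  abel

theorem four_nsmul_Dop_self_sub_Dop_zero_left_of_odd {h : X → Y} (hodd : ∀ x, h (-x) = -h x)
    (h0 : h 0 = 0) (t : X) : 4 • Dop h t t - Dop h 0 t = 6 • (h (2 • t) - 8 • h t) := by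
  rw [Dop_self_of_odd hodd h0, Dop_zero_left_of_odd hodd h0]
  abel

variable [IsAddTorsionFree Y]

theorem IsCubic.map_two_nsmul {c : X → Y} (hc : IsCubic c) (x : X) : c (2 • x) = 8 • c x := by
  apply nsmul_right_injective two_ne_zero
  have h := hc x 0
  simp only [add_zero, sub_zero] at h
  simp only [two_nsmul] at h ⊢
  rw [h]
  abel

namespace MixedEq

variable {c : X → Y} (hc : MixedEq c) (hodd : ∀ x, c (-x) = -c x)
include hc hodd

theorem map_two_nsmul_of_odd (x : X) : c (2 • x) = 8 • c x := by
  have h0 : c 0 = 0 := Function.Odd.map_zero hodd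
  have h := four_nsmul_Dop_self_sub_Dop_zero_left_of_odd hodd h0 x
  rw [(mixedEq_iff_forall_Dop_eq_zero c).1 hc, (mixedEq_iff_forall_Dop_eq_zero c).1 hc] at h
  simpa [sub_eq_zero] using h.symm

theorem map_three_nsmul_of_odd (x : X) : c (3 • x) = 27 • c x := by
  have h := Dop_self_of_odd hodd (Function.Odd.map_zero hodd) x
  rw [(mixedEq_iff_forall_Dop_eq_zero c).1 hc, hc.map_two_nsmul_of_odd hodd] at h
  linear_combination (norm := abel1) h

theorem isCubic_of_odd : IsCubic c := by
  intro x y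
  have h := (mixedEq_iff_forall_Dop_eq_zero c).1 hc (2 • x) y
  have hp : 2 • x + 2 • y = 2 • (x + y) := by abel
  have hm : 2 • x - 2 • y = 2 • (x - y) := by abel
  rw [Dop, hp, hm] at h
  simp only [hc.map_two_nsmul_of_odd hodd, hc.map_three_nsmul_of_odd hodd] at h
  apply nsmul_right_injective (show 12 ≠ 0 by norm_num)
  dsimp only
  linear_combination (norm := abel1) -h

end MixedEq

end Algebra

section Limits

variable {ι X Y : Type*} [AddCommGroup X] [AddCommGroup Y] [TopologicalSpace Y]
  [IsTopologicalAddGroup Y] {l : Filter ι} {F : ι → X → Y} {C : X → Y}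

theorem tendsto_Dop (hF : ∀ x, Tendsto (fun i => F i x) l (𝓝 (C x))) (x y : X) :
    Tendsto (fun i => Dop (F i) x y) l (𝓝 (Dop C x y)) :=
  (((((((hF _).add (hF _)).const_smul 3).sub (((hF _).add (hF _)).const_smul 12)).sub
    ((hF _).const_smul 4)).add ((hF _).const_smul 18)).sub ((hF _).const_smul 36)).add
    ((hF _).const_smul 18)

theorem odd_of_tendsto [T2Space Y] [l.NeBot] (hodd : ∀ i x, F i (-x) = -F i x)
    (hF : ∀ x, Tendsto (fun i => F i x) l (𝓝 (C x))) (x : X) : C (-x) = -C x :=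
  tendsto_nhds_unique (hF (-x)) (by simpa only [hodd] using (hF x).neg)

end Limits

section Rescaling

variable {X Y : Type*} [AddCommGroup X] [Module ℝ X] [AddCommGroup Y] [Module ℝ Y]

theorem Dop_smul_comp_smul (f : X → Y) (a c : ℝ) (x y : X) :
    Dop (fun x => a • f (c • x)) x y = a • Dop f (c • x) (c • y) := by
  simp only [Dop, smul_add, smul_sub, smul_comm a, smul_comm c]

theorem mixedEq_of_tendsto {ι : Type*} {l : Filter ι} [l.NeBot] [TopologicalSpace Y]
    [IsTopologicalAddGroup Y] [T2Space Y] {f C : X → Y} {a c : ι → ℝ}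
    (hC : ∀ x, Tendsto (fun i => a i • f (c i • x)) l (𝓝 (C x)))
    (hD : ∀ x y, Tendsto (fun i => a i • Dop f (c i • x) (c i • y)) l (𝓝 0)) : MixedEq C := by
  refine (mixedEq_iff_forall_Dop_eq_zero C).2 fun x y => tendsto_nhds_unique ?_ (hD x y)
  simpa only [Dop_smul_comp_smul] using tendsto_Dop hC x y

theorem inv_two_pow_smul_eq_two_nsmul (n : ℕ) (x : X) :
    ((2:ℝ) ^ n)⁻¹ • x = 2 • ((2:ℝ) ^ (n + 1))⁻¹ • x := by
  rw [← Nat.cast_smul_eq_nsmul ℝ, smul_smul, pow_succ, Nat.cast_two]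
  congr 1
  field_simp

theorem inv_two_pow_smul_inv_two_pow_smul (k n : ℕ) (x : X) :
    ((2:ℝ) ^ k)⁻¹ • ((2:ℝ) ^ n)⁻¹ • x = ((2:ℝ) ^ (k + n))⁻¹ • x := by
  rw [smul_smul, ← mul_inv, ← pow_add]

theorem eq_pow_smul_inv_two_pow_smul {a : ℝ} {c : X → Y} (hc : ∀ t, c (2 • t) = a • c t)
    (n : ℕ) (x : X) : c x = a ^ n • c (((2:ℝ) ^ n)⁻¹ • x) := by
  induction n with
  | zero => simp
  | succ n ih => rw [ih, inv_two_pow_smul_eq_two_nsmul n, hc, smul_smul, ← pow_succ]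

end Rescaling

section Stability

variable {X Y : Type*} [AddCommGroup X] [Module ℝ X] [NormedAddCommGroup Y] [NormedSpace ℝ Y]
  {a : ℝ} {ψ : X → ℝ}

theorem norm_pow_smul_sub_pow_succ_smul_le (ha : 0 ≤ a) {g : X → Y}
    (hg : ∀ t, ‖g (2 • t) - a • g t‖ ≤ ψ t) (n : ℕ) (x : X) :
    ‖a ^ n • g (((2:ℝ) ^ n)⁻¹ • x) - a ^ (n + 1) • g (((2:ℝ) ^ (n + 1))⁻¹ • x)‖ ≤
      a ^ n * ψ (((2:ℝ) ^ (n + 1))⁻¹ • x) := by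
  rw [inv_two_pow_smul_eq_two_nsmul n, pow_succ a, mul_smul, ← smul_sub, norm_smul,
    Real.norm_of_nonneg (pow_nonneg ha n)]
  exact mul_le_mul_of_nonneg_left (hg _) (pow_nonneg ha n)

theorem exists_tendsto_pow_smul_of_norm_sub_le [CompleteSpace Y] (ha : 0 ≤ a) {g : X → Y}
    (hg : ∀ t, ‖g (2 • t) - a • g t‖ ≤ ψ t)
    (hψ : ∀ x, Summable fun i : ℕ => a ^ i * ψ (((2:ℝ) ^ (i + 1))⁻¹ • x)) :
    ∃ C : X → Y, (∀ x, Tendsto (fun n : ℕ => a ^ n • g (((2:ℝ) ^ n)⁻¹ • x)) atTop (𝓝 (C x))) ∧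
      ∀ x, ‖g x - C x‖ ≤ ∑' i : ℕ, a ^ i * ψ (((2:ℝ) ^ (i + 1))⁻¹ • x) := by
  have hstep (x : X) (n : ℕ) :=
    (dist_eq_norm _ _).trans_le (norm_pow_smul_sub_pow_succ_smul_le ha hg n x)
  choose C hC using fun x =>
    cauchySeq_tendsto_of_complete (cauchySeq_of_dist_le_of_summable _ (hstep x) (hψ x))
  refine ⟨C, hC, fun x => ?_⟩
  simpa [dist_eq_norm] using dist_le_tsum_of_dist_le_of_tendsto₀ _ (hstep x) (hψ x) (hC x)

-- These are the tails of `∑ aⁱ ψ (x / 2ⁱ⁺¹)`; a non-summable tail has the junk value `0`.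
theorem tendsto_pow_mul_tsum_inv_two_pow_smul (x : X) :
    Tendsto (fun n : ℕ => a ^ n * ∑' i : ℕ, a ^ i * ψ (((2:ℝ) ^ (i + 1))⁻¹ • ((2:ℝ) ^ n)⁻¹ • x))
      atTop (𝓝 0) := by
  have htail (n : ℕ) : a ^ n * ∑' i : ℕ, a ^ i * ψ (((2:ℝ) ^ (i + 1))⁻¹ • ((2:ℝ) ^ n)⁻¹ • x) =
      ∑' i : ℕ, a ^ (i + n) * ψ (((2:ℝ) ^ (i + n + 1))⁻¹ • x) := by
    rw [← tsum_mul_left]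
    congr 1 with i
    rw [inv_two_pow_smul_inv_two_pow_smul, add_right_comm, pow_add a]
    ring
  simpa only [htail] using
    tendsto_sum_nat_add fun j => a ^ j * ψ (((2:ℝ) ^ (j + 1))⁻¹ • x)

theorem eq_of_norm_sub_le_tsum (ha : 0 ≤ a) {g C C' : X → Y}
    (hC : ∀ t, C (2 • t) = a • C t) (hC' : ∀ t, C' (2 • t) = a • C' t)
    (hgC : ∀ x, ‖g x - C x‖ ≤ ∑' i : ℕ, a ^ i * ψ (((2:ℝ) ^ (i + 1))⁻¹ • x))
    (hgC' : ∀ x, ‖g x - C' x‖ ≤ ∑' i : ℕ, a ^ i * ψ (((2:ℝ) ^ (i + 1))⁻¹ • x)) :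
    C' = C := by
  funext x
  have hbound (n : ℕ) : ‖C' x - C x‖ ≤
      2 * (a ^ n * ∑' i : ℕ, a ^ i * ψ (((2:ℝ) ^ (i + 1))⁻¹ • ((2:ℝ) ^ n)⁻¹ • x)) := by
    rw [eq_pow_smul_inv_two_pow_smul hC' n x, eq_pow_smul_inv_two_pow_smul hC n x, ← smul_sub,
      norm_smul, Real.norm_of_nonneg (pow_nonneg ha n), mul_left_comm]
    set t := ((2:ℝ) ^ n)⁻¹ • x
    have htri : ‖C' t - C t‖ ≤ 2 * ∑' i : ℕ, a ^ i * ψ (((2:ℝ) ^ (i + 1))⁻¹ • t) := by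
      have := norm_sub_le_norm_sub_add_norm_sub (C' t) (g t) (C t)
      rw [norm_sub_rev (C' t) (g t)] at this
      linarith [hgC t, hgC' t]
    exact mul_le_mul_of_nonneg_left htri (pow_nonneg ha n)
  have hlim := (tendsto_pow_mul_tsum_inv_two_pow_smul (a := a) (ψ := ψ) x).const_mul 2
  rw [mul_zero] at hlim
  exact sub_eq_zero.1 (norm_le_zero_iff.1 (ge_of_tendsto' hlim hbound))

end Stability

section MixedEquation

variable {X Y : Type*} [AddCommGroup X] [NormedAddCommGroup Y] [NormedSpace ℝ Y]

theorem norm_map_two_nsmul_sub_le_of_odd {f : X → Y} (hodd : ∀ x, f (-x) = -f x)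
    {φ : X → X → ℝ} (hbd : ∀ x y, ‖Dop f x y‖ ≤ φ x y) (t : X) :
    ‖f (2 • t) - (8:ℝ) • f t‖ ≤ 1 / 6 * φ 0 t + 4 / 6 * φ t t := by
  have : IsAddTorsionFree Y := .of_isTorsionFree ℝ Y
  have h6 : 6 * ‖f (2 • t) - (8:ℝ) • f t‖ = ‖4 • Dop f t t - Dop f 0 t‖ := by
    rw [ofNat_smul_eq_nsmul ℝ 8,
      four_nsmul_Dop_self_sub_Dop_zero_left_of_odd hodd (Function.Odd.map_zero hodd),
      ← ofNat_smul_eq_nsmul ℝ 6, norm_smul, Real.norm_ofNat]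
  have hcomb : ‖4 • Dop f t t - Dop f 0 t‖ ≤ 4 * φ t t + φ 0 t := by
    grw [norm_sub_le, norm_nsmul_le, hbd, hbd]
    norm_num
  linarith

theorem summable_pow_mul_of_summable_pow_succ_mul_add {u v : ℕ → ℝ} (hu : ∀ i, 0 ≤ u i)
    (hv : ∀ i, 0 ≤ v i) (h : Summable fun i => (8:ℝ) ^ (i + 1) * (u i + 4 * v i)) :
    Summable (fun i => (8:ℝ) ^ i * u i) ∧ Summable (fun i => (8:ℝ) ^ i * v i) := by
  have h8u (i : ℕ) : 0 ≤ (8:ℝ) ^ i * u i := mul_nonneg (by positivity) (hu i)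
  have h8v (i : ℕ) : 0 ≤ (8:ℝ) ^ i * v i := mul_nonneg (by positivity) (hv i)
  have hle (i : ℕ) : (8:ℝ) ^ i * u i + 8 ^ i * v i ≤ 8 ^ (i + 1) * (u i + 4 * v i) := by
    rw [pow_succ]
    nlinarith [h8u i, h8v i]
  exact ⟨h.of_nonneg_of_le h8u fun i => by linarith [hle i, h8v i],
    h.of_nonneg_of_le h8v fun i => by linarith [hle i, h8u i]⟩

end MixedEquation

theorem stmt_7_general {X Y : Type*} [AddCommGroup X] [Module ℝ X]
    [NormedAddCommGroup Y] [NormedSpace ℝ Y] [CompleteSpace Y]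
    (f : X → Y) (hodd : ∀ x : X, f (-x) = -f x)
    (φ : X → X → ℝ)
    (hbd : ∀ x y : X, ‖Dop f x y‖ ≤ φ x y)
    (hsum : ∀ x y : X, Summable fun i : ℕ =>
      (8 : ℝ) ^ (i + 1) *
        (φ (((2 : ℝ) ^ (i + 1))⁻¹ • x) (((2 : ℝ) ^ (i + 1))⁻¹ • y) +
          4 * φ 0 (((2 : ℝ) ^ (i + 1))⁻¹ • x)))
    (hlim : ∀ x y : X, Tendsto
      (fun n : ℕ => (8 : ℝ) ^ n * φ (((2 : ℝ) ^ n)⁻¹ • x) (((2 : ℝ) ^ n)⁻¹ • y)) atTop (𝓝 0)) :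
    ∃ C : X → Y,
      (∀ x : X, Tendsto (fun n : ℕ => (8 : ℝ) ^ n • f (((2 : ℝ) ^ n)⁻¹ • x)) atTop (𝓝 (C x))) ∧
      IsCubic C ∧ MixedEq C ∧
      (∀ x : X, ‖f x - C x‖ ≤
        (1 / 6) * ∑' i : ℕ, (8 : ℝ) ^ i * φ 0 (((2 : ℝ) ^ (i + 1))⁻¹ • x) +
        (4 / 6) * ∑' i : ℕ, (8 : ℝ) ^ i *
          φ (((2 : ℝ) ^ (i + 1))⁻¹ • x) (((2 : ℝ) ^ (i + 1))⁻¹ • x)) ∧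
      (∀ C' : X → Y, IsCubic C' → MixedEq C' →
        (∀ x : X, ‖f x - C' x‖ ≤
          (1 / 6) * ∑' i : ℕ, (8 : ℝ) ^ i * φ 0 (((2 : ℝ) ^ (i + 1))⁻¹ • x) +
          (4 / 6) * ∑' i : ℕ, (8 : ℝ) ^ i *
            φ (((2 : ℝ) ^ (i + 1))⁻¹ • x) (((2 : ℝ) ^ (i + 1))⁻¹ • x)) →
        C' = C) := by
  have : IsAddTorsionFree Y := .of_isTorsionFree ℝ Y
  have hφ0 (x y : X) : 0 ≤ φ x y := (norm_nonneg _).trans (hbd x y)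
  have hsummable (x : X) := summable_pow_mul_of_summable_pow_succ_mul_add
    (fun _ => hφ0 _ _) (fun _ => hφ0 _ _) (hsum x x)
  set ψ : X → ℝ := fun t => 1 / 6 * φ 0 t + 4 / 6 * φ t t
  have hψ (x : X) : HasSum (fun i : ℕ => (8:ℝ) ^ i * ψ (((2:ℝ) ^ (i + 1))⁻¹ • x))
      ((1 / 6) * ∑' i : ℕ, (8 : ℝ) ^ i * φ 0 (((2 : ℝ) ^ (i + 1))⁻¹ • x) +
        (4 / 6) * ∑' i : ℕ, (8 : ℝ) ^ i *
          φ (((2 : ℝ) ^ (i + 1))⁻¹ • x) (((2 : ℝ) ^ (i + 1))⁻¹ • x)) := by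
    simp only [ψ, mul_add, mul_left_comm ((8:ℝ) ^ _)]
    exact ((hsummable x).2.hasSum.mul_left _).add ((hsummable x).1.hasSum.mul_left _)
  obtain ⟨C, hC, hfC⟩ := exists_tendsto_pow_smul_of_norm_sub_le (by norm_num)
    (norm_map_two_nsmul_sub_le_of_odd hodd hbd) fun x => (hψ x).summable
  have hCodd := odd_of_tendsto (fun n x => by simp only [smul_neg, hodd]) hC
  have hCmixed : MixedEq C := mixedEq_of_tendsto hC fun x y => squeeze_zero_norm (fun n => by
    rw [norm_smul, Real.norm_of_nonneg (by positivity)]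
    exact mul_le_mul_of_nonneg_left (hbd _ _) (by positivity)) (hlim x y)
  have hdouble {c : X → Y} (hc : IsCubic c) (t : X) : c (2 • t) = (8:ℝ) • c t := by
    rw [hc.map_two_nsmul, ofNat_smul_eq_nsmul ℝ 8]
  have hCcubic := hCmixed.isCubic_of_odd hCodd
  refine ⟨C, hC, hCcubic, hCmixed, fun x => (hψ x).tsum_eq ▸ hfC x, fun C' hC' _ hfC' => ?_⟩
  exact eq_of_norm_sub_le_tsum (by norm_num) (hdouble hCcubic) (hdouble hC')
    hfC fun x => (hψ x).tsum_eq ▸ hfC' x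

theorem stmt_7 {X Y : Type*} [AddCommGroup X] [Module ℝ X]
    [NormedAddCommGroup Y] [NormedSpace ℝ Y] [CompleteSpace Y]
    (f : X → Y) (hodd : ∀ x : X, f (-x) = -f x)
    (φ : X → X → ℝ) (hφ0 : ∀ x y : X, 0 ≤ φ x y)
    (hbd : ∀ x y : X, ‖Dop f x y‖ ≤ φ x y)
    (hsum : ∀ x y : X, Summable fun i : ℕ =>
      (8 : ℝ) ^ (i + 1) *
        (φ (((2 : ℝ) ^ (i + 1))⁻¹ • x) (((2 : ℝ) ^ (i + 1))⁻¹ • y) +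
          4 * φ 0 (((2 : ℝ) ^ (i + 1))⁻¹ • x)))
    (hlim : ∀ x y : X, Tendsto
      (fun n : ℕ => (8 : ℝ) ^ n * φ (((2 : ℝ) ^ n)⁻¹ • x) (((2 : ℝ) ^ n)⁻¹ • y)) atTop (𝓝 0)) :
    ∃ C : X → Y,
      (∀ x : X, Tendsto (fun n : ℕ => (8 : ℝ) ^ n • f (((2 : ℝ) ^ n)⁻¹ • x)) atTop (𝓝 (C x))) ∧
      IsCubic C ∧ MixedEq C ∧
      (∀ x : X, ‖f x - C x‖ ≤
        (1 / 6) * ∑' i : ℕ, (8 : ℝ) ^ i * φ 0 (((2 : ℝ) ^ (i + 1))⁻¹ • x) +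
        (4 / 6) * ∑' i : ℕ, (8 : ℝ) ^ i *
          φ (((2 : ℝ) ^ (i + 1))⁻¹ • x) (((2 : ℝ) ^ (i + 1))⁻¹ • x)) ∧
      (∀ C' : X → Y, IsCubic C' → MixedEq C' →
        (∀ x : X, ‖f x - C' x‖ ≤
          (1 / 6) * ∑' i : ℕ, (8 : ℝ) ^ i * φ 0 (((2 : ℝ) ^ (i + 1))⁻¹ • x) +
          (4 / 6) * ∑' i : ℕ, (8 : ℝ) ^ i *
            φ (((2 : ℝ) ^ (i + 1))⁻¹ • x) (((2 : ℝ) ^ (i + 1))⁻¹ • x)) →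
        C' = C) :=
  stmt_7_general f hodd φ hbd hsum hlim
end

section
/- Let X be a real vector space, Y a real Banach space, and let f : X → Y be an even function with ‖D_f(x,y)‖ ≤ φ(x,y) for all x, y ∈ X, where φ : X × X → [0,∞) satisfies: ∑_{i=1}^∞ 4^i·(φ(x/2^i, x/2^{i+1}) + φ(x/2^i, x/2^i)) converges for all x ∈ X, and lim_{n→∞} 4^n·φ(x/2^n, y/2^n) = 0 for all x, y ∈ X. Then for each x ∈ X the limit Q₁(x) := lim_{n→∞} 4^n·(f(x/2^{n-1}) − 16·f(x/2^n)) exists, Q₁ : X → Y is a quadratic function satisfying the mixed functional equation (1.5), ‖f(2x) − 16·f(x) − Q₁(x)‖ ≤ ∑_{i=0}^∞ 4^i·((1/3)·φ(x/2^i, x/2^{i+1}) + (16/3)·φ(x/2^{i+1}, x/2^{i+1})) for all x ∈ X, and Q₁ is the unique quadratic function satisfying (1.5) and this inequality. -/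
open Filter Topology

set_option maxHeartbeats 4000000 in
set_option maxRecDepth 16000 in
private lemma quad_aux {X Y : Type*} [AddCommGroup X] [Module ℝ X] [AddCommGroup Y]
    [Module ℝ Y] (Q : X → Y) (hev : ∀ v : X, Q (-v) = Q v) (h0 : Q 0 = 0)
    (hD : ∀ x y : X, Dop Q x y = 0) (x y : X) :
    (Q (2 • (x + y)) - 16 • Q (x + y)) + (Q (2 • (x - y)) - 16 • Q (x - y))
      = 2 • (Q (2 • x) - 16 • Q x) + 2 • (Q (2 • y) - 16 • Q y) := by
  have H0 : 3 • (Q ((3 : ℤ) • x + (2 : ℤ) • y) + Q ((1 : ℤ) • x + (2 : ℤ) • y)) - 12 • (Q ((2 : ℤ) • x + (1 : ℤ) • y) + Q y) - 4 • Q ((3 : ℤ) • x + (3 : ℤ) • y) + 18 • Q ((2 : ℤ) • x + (2 : ℤ) • y) - 36 • Q (x + y) + 18 • Q x = 0 := by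
    have t := hD (x) ((x + y))
    simp only [Dop] at t
    rw [show (x + 2 • (x + y) : X) = ((3 : ℤ) • x + (2 : ℤ) • y) by abel, show (x - 2 • (x + y) : X) = (-((1 : ℤ) • x + (2 : ℤ) • y)) by abel, show (x + (x + y) : X) = ((2 : ℤ) • x + (1 : ℤ) • y) by abel, show (x - (x + y) : X) = (-y) by abel, show (3 • (x + y) : X) = ((3 : ℤ) • x + (3 : ℤ) • y) by abel, show (2 • (x + y) : X) = ((2 : ℤ) • x + (2 : ℤ) • y) by abel] at t
    rw [hev ((1 : ℤ) • x + (2 : ℤ) • y)] at t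
    rw [hev y] at t
    exact t
  have H1 : 3 • (Q ((1 : ℤ) • x + (4 : ℤ) • y) + Q ((1 : ℤ) • x + (-4 : ℤ) • y)) - 12 • (Q ((1 : ℤ) • x + (2 : ℤ) • y) + Q ((1 : ℤ) • x + (-2 : ℤ) • y)) - 4 • Q ((6 : ℤ) • y) + 18 • Q ((4 : ℤ) • y) - 36 • Q ((2 : ℤ) • y) + 18 • Q x = 0 := by
    have t := hD (x) (((2 : ℤ) • y))
    simp only [Dop] at t
    rw [show (x + 2 • ((2 : ℤ) • y) : X) = ((1 : ℤ) • x + (4 : ℤ) • y) by abel, show (x - 2 • ((2 : ℤ) • y) : X) = ((1 : ℤ) • x + (-4 : ℤ) • y) by abel, show (x + ((2 : ℤ) • y) : X) = ((1 : ℤ) • x + (2 : ℤ) • y) by abel, show (x - ((2 : ℤ) • y) : X) = ((1 : ℤ) • x + (-2 : ℤ) • y) by abel, show (3 • ((2 : ℤ) • y) : X) = ((6 : ℤ) • y) by abel, show (2 • ((2 : ℤ) • y) : X) = ((4 : ℤ) • y) by abel] at t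
    exact t
  have H2 : 3 • (Q ((3 : ℤ) • y) + Q y) - 12 • (Q ((2 : ℤ) • y) + (0 : Y)) - 4 • Q ((3 : ℤ) • y) + 18 • Q ((2 : ℤ) • y) - 36 • Q y + 18 • Q y = 0 := by
    have t := hD (y) (y)
    simp only [Dop] at t
    rw [show (y + 2 • y : X) = ((3 : ℤ) • y) by abel, show (y - 2 • y : X) = (-y) by abel, show (y + y : X) = ((2 : ℤ) • y) by abel, show (y - y : X) = (0 : X) by abel, show (3 • y : X) = ((3 : ℤ) • y) by abel, show (2 • y : X) = ((2 : ℤ) • y) by abel] at t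
    rw [hev y] at t
    rw [h0] at t
    exact t
  have H3 : 3 • (Q ((2 : ℤ) • x + (3 : ℤ) • y) + Q ((2 : ℤ) • x + (1 : ℤ) • y)) - 12 • (Q ((1 : ℤ) • x + (2 : ℤ) • y) + Q x) - 4 • Q ((3 : ℤ) • x + (3 : ℤ) • y) + 18 • Q ((2 : ℤ) • x + (2 : ℤ) • y) - 36 • Q (x + y) + 18 • Q y = 0 := by
    have t := hD (y) ((x + y))
    simp only [Dop] at t
    rw [show (y + 2 • (x + y) : X) = ((2 : ℤ) • x + (3 : ℤ) • y) by abel, show (y - 2 • (x + y) : X) = (-((2 : ℤ) • x + (1 : ℤ) • y)) by abel, show (y + (x + y) : X) = ((1 : ℤ) • x + (2 : ℤ) • y) by abel, show (y - (x + y) : X) = (-x) by abel, show (3 • (x + y) : X) = ((3 : ℤ) • x + (3 : ℤ) • y) by abel, show (2 • (x + y) : X) = ((2 : ℤ) • x + (2 : ℤ) • y) by abel] at t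
    rw [hev ((2 : ℤ) • x + (1 : ℤ) • y)] at t
    rw [hev x] at t
    exact t
  have H4 : 3 • (Q ((3 : ℤ) • x + (1 : ℤ) • y) + Q (x - y)) - 12 • (Q ((2 : ℤ) • x + (1 : ℤ) • y) + Q y) - 4 • Q ((3 : ℤ) • x) + 18 • Q ((2 : ℤ) • x) - 36 • Q x + 18 • Q (x + y) = 0 := by
    have t := hD ((x + y)) (x)
    simp only [Dop] at t
    rw [show ((x + y) + 2 • x : X) = ((3 : ℤ) • x + (1 : ℤ) • y) by abel, show ((x + y) - 2 • x : X) = (-(x - y)) by abel, show ((x + y) + x : X) = ((2 : ℤ) • x + (1 : ℤ) • y) by abel, show ((x + y) - x : X) = y by abel, show (3 • x : X) = ((3 : ℤ) • x) by abel, show (2 • x : X) = ((2 : ℤ) • x) by abel] at t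
    rw [hev (x - y)] at t
    exact t
  have H5 : 3 • (Q ((1 : ℤ) • x + (5 : ℤ) • y) + Q ((1 : ℤ) • x + (-3 : ℤ) • y)) - 12 • (Q ((1 : ℤ) • x + (3 : ℤ) • y) + Q (x - y)) - 4 • Q ((6 : ℤ) • y) + 18 • Q ((4 : ℤ) • y) - 36 • Q ((2 : ℤ) • y) + 18 • Q (x + y) = 0 := by
    have t := hD ((x + y)) (((2 : ℤ) • y))
    simp only [Dop] at t
    rw [show ((x + y) + 2 • ((2 : ℤ) • y) : X) = ((1 : ℤ) • x + (5 : ℤ) • y) by abel, show ((x + y) - 2 • ((2 : ℤ) • y) : X) = ((1 : ℤ) • x + (-3 : ℤ) • y) by abel, show ((x + y) + ((2 : ℤ) • y) : X) = ((1 : ℤ) • x + (3 : ℤ) • y) by abel, show ((x + y) - ((2 : ℤ) • y) : X) = (x - y) by abel, show (3 • ((2 : ℤ) • y) : X) = ((6 : ℤ) • y) by abel, show (2 • ((2 : ℤ) • y) : X) = ((4 : ℤ) • y) by abel] at t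
    exact t
  have H6 : 3 • (Q ((3 : ℤ) • x + (-3 : ℤ) • y) + Q ((1 : ℤ) • x + (-5 : ℤ) • y)) - 12 • (Q ((2 : ℤ) • x + (-1 : ℤ) • y) + Q ((3 : ℤ) • y)) - 4 • Q ((3 : ℤ) • x + (-6 : ℤ) • y) + 18 • Q ((2 : ℤ) • x + (-4 : ℤ) • y) - 36 • Q ((1 : ℤ) • x + (-2 : ℤ) • y) + 18 • Q (x + y) = 0 := by
    have t := hD ((x + y)) (((1 : ℤ) • x + (-2 : ℤ) • y))
    simp only [Dop] at t
    rw [show ((x + y) + 2 • ((1 : ℤ) • x + (-2 : ℤ) • y) : X) = ((3 : ℤ) • x + (-3 : ℤ) • y) by abel, show ((x + y) - 2 • ((1 : ℤ) • x + (-2 : ℤ) • y) : X) = (-((1 : ℤ) • x + (-5 : ℤ) • y)) by abel, show ((x + y) + ((1 : ℤ) • x + (-2 : ℤ) • y) : X) = ((2 : ℤ) • x + (-1 : ℤ) • y) by abel, show ((x + y) - ((1 : ℤ) • x + (-2 : ℤ) • y) : X) = ((3 : ℤ) • y) by abel, show (3 • ((1 : ℤ) • x + (-2 : ℤ) • y)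 : X) = ((3 : ℤ) • x + (-6 : ℤ) • y) by abel, show (2 • ((1 : ℤ) • x + (-2 : ℤ) • y) : X) = ((2 : ℤ) • x + (-4 : ℤ) • y) by abel] at t
    rw [hev ((1 : ℤ) • x + (-5 : ℤ) • y)] at t
    exact t
  have H7 : 3 • (Q ((1 : ℤ) • x + (3 : ℤ) • y) + Q ((1 : ℤ) • x + (-5 : ℤ) • y)) - 12 • (Q (x + y) + Q ((1 : ℤ) • x + (-3 : ℤ) • y)) - 4 • Q ((6 : ℤ) • y) + 18 • Q ((4 : ℤ) • y) - 36 • Q ((2 : ℤ) • y) + 18 • Q (x - y) = 0 := by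
    have t := hD ((x - y)) (((2 : ℤ) • y))
    simp only [Dop] at t
    rw [show ((x - y) + 2 • ((2 : ℤ) • y) : X) = ((1 : ℤ) • x + (3 : ℤ) • y) by abel, show ((x - y) - 2 • ((2 : ℤ) • y) : X) = ((1 : ℤ) • x + (-5 : ℤ) • y) by abel, show ((x - y) + ((2 : ℤ) • y) : X) = (x + y) by abel, show ((x - y) - ((2 : ℤ) • y) : X) = ((1 : ℤ) • x + (-3 : ℤ) • y) by abel, show (3 • ((2 : ℤ) • y) : X) = ((6 : ℤ) • y) by abel, show (2 • ((2 : ℤ) • y) : X) = ((4 : ℤ) • y) by abel] at t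
    exact t
  have H8 : 3 • (Q ((3 : ℤ) • x + (3 : ℤ) • y) + Q ((1 : ℤ) • x + (5 : ℤ) • y)) - 12 • (Q ((2 : ℤ) • x + (1 : ℤ) • y) + Q ((3 : ℤ) • y)) - 4 • Q ((3 : ℤ) • x + (6 : ℤ) • y) + 18 • Q ((2 : ℤ) • x + (4 : ℤ) • y) - 36 • Q ((1 : ℤ) • x + (2 : ℤ) • y) + 18 • Q (x - y) = 0 := by
    have t := hD ((x - y)) (((1 : ℤ) • x + (2 : ℤ) • y))
    simp only [Dop] at t
    rw [show ((x - y) + 2 • ((1 : ℤ) • x + (2 : ℤ) • y) : X) = ((3 : ℤ) • x + (3 : ℤ) • y) by abel, show ((x - y) - 2 • ((1 : ℤ) • x + (2 : ℤ) • y) : X) = (-((1 : ℤ) • x + (5 : ℤ) • y)) by abel, show ((x - y) + ((1 : ℤ) • x + (2 : ℤ) • y) : X) = ((2 : ℤ) • x + (1 : ℤ) • y) by abel, show ((x - y) - ((1 : ℤ) • x + (2 : ℤ) • y) : X) = (-((3 : ℤ) • y)) by abel, show (3 • ((1 : ℤ) • x + (2 : ℤ) • y) : X) = ((3 : ℤ)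 • x + (6 : ℤ) • y) by abel, show (2 • ((1 : ℤ) • x + (2 : ℤ) • y) : X) = ((2 : ℤ) • x + (4 : ℤ) • y) by abel] at t
    rw [hev ((1 : ℤ) • x + (5 : ℤ) • y)] at t
    rw [hev ((3 : ℤ) • y)] at t
    exact t
  have H9 : 3 • (Q ((2 : ℤ) • x + (2 : ℤ) • y) + Q ((2 : ℤ) • x + (-2 : ℤ) • y)) - 12 • (Q ((2 : ℤ) • x + (1 : ℤ) • y) + Q ((2 : ℤ) • x + (-1 : ℤ) • y)) - 4 • Q ((3 : ℤ) • y) + 18 • Q ((2 : ℤ) • y) - 36 • Q y + 18 • Q ((2 : ℤ) • x) = 0 := by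
    have t := hD (((2 : ℤ) • x)) (y)
    simp only [Dop] at t
    rw [show (((2 : ℤ) • x) + 2 • y : X) = ((2 : ℤ) • x + (2 : ℤ) • y) by abel, show (((2 : ℤ) • x) - 2 • y : X) = ((2 : ℤ) • x + (-2 : ℤ) • y) by abel, show (((2 : ℤ) • x) + y : X) = ((2 : ℤ) • x + (1 : ℤ) • y) by abel, show (((2 : ℤ) • x) - y : X) = ((2 : ℤ) • x + (-1 : ℤ) • y) by abel, show (3 • y : X) = ((3 : ℤ) • y) by abel, show (2 • y : X) = ((2 : ℤ) • y) by abel] at t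
    exact t
  have H10 : 3 • (Q ((2 : ℤ) • x + (4 : ℤ) • y) + Q ((2 : ℤ) • x + (-4 : ℤ) • y)) - 12 • (Q ((2 : ℤ) • x + (2 : ℤ) • y) + Q ((2 : ℤ) • x + (-2 : ℤ) • y)) - 4 • Q ((6 : ℤ) • y) + 18 • Q ((4 : ℤ) • y) - 36 • Q ((2 : ℤ) • y) + 18 • Q ((2 : ℤ) • x) = 0 := by
    have t := hD (((2 : ℤ) • x)) (((2 : ℤ) • y))
    simp only [Dop] at t
    rw [show (((2 : ℤ) • x) + 2 • ((2 : ℤ) • y) : X) = ((2 : ℤ) • x + (4 : ℤ) • y) by abel, show (((2 : ℤ) • x) - 2 • ((2 : ℤ) • y) : X) = ((2 : ℤ) • x + (-4 : ℤ) • y) by abel, show (((2 : ℤ) • x) + ((2 : ℤ) • y) : X) = ((2 : ℤ) • x + (2 : ℤ) • y) by abel, show (((2 : ℤ) • x) - ((2 : ℤ) • y) : X) = ((2 : ℤ) • x + (-2 : ℤ) • y) by abel, show (3 • ((2 : ℤ) • y) : X) = ((6 : ℤ) • y) by abel, show (2 • ((2 : ℤ) • y) : X) = ((4 : ℤ) •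 y) by abel] at t
    exact t
  have H11 : 3 • (Q ((2 : ℤ) • x + (2 : ℤ) • y) + Q ((2 : ℤ) • x + (-2 : ℤ) • y)) - 12 • (Q ((1 : ℤ) • x + (2 : ℤ) • y) + Q ((1 : ℤ) • x + (-2 : ℤ) • y)) - 4 • Q ((3 : ℤ) • x) + 18 • Q ((2 : ℤ) • x) - 36 • Q x + 18 • Q ((2 : ℤ) • y) = 0 := by
    have t := hD (((2 : ℤ) • y)) (x)
    simp only [Dop] at t
    rw [show (((2 : ℤ) • y) + 2 • x : X) = ((2 : ℤ) • x + (2 : ℤ) • y) by abel, show (((2 : ℤ) • y) - 2 • x : X) = (-((2 : ℤ) • x + (-2 : ℤ) • y)) by abel, show (((2 : ℤ) • y) + x : X) = ((1 : ℤ) • x + (2 : ℤ) • y) by abel, show (((2 : ℤ) • y) - x : X) = (-((1 : ℤ) • x + (-2 : ℤ) • y)) by abel, show (3 • x : X) = ((3 : ℤ) • x) by abel, show (2 • x : X) = ((2 : ℤ) • x) by abel] at t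
    rw [hev ((2 : ℤ) • x + (-2 : ℤ) • y)] at t
    rw [hev ((1 : ℤ) • x + (-2 : ℤ) • y)] at t
    exact t
  have H12 : 3 • (Q ((2 : ℤ) • x + (4 : ℤ) • y) + Q ((2 : ℤ) • x)) - 12 • (Q ((1 : ℤ) • x + (3 : ℤ) • y) + Q (x - y)) - 4 • Q ((3 : ℤ) • x + (3 : ℤ) • y) + 18 • Q ((2 : ℤ) • x + (2 : ℤ) • y) - 36 • Q (x + y) + 18 • Q ((2 : ℤ) • y) = 0 := by
    have t := hD (((2 : ℤ) • y)) ((x + y))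
    simp only [Dop] at t
    rw [show (((2 : ℤ) • y) + 2 • (x + y) : X) = ((2 : ℤ) • x + (4 : ℤ) • y) by abel, show (((2 : ℤ) • y) - 2 • (x + y) : X) = (-((2 : ℤ) • x)) by abel, show (((2 : ℤ) • y) + (x + y) : X) = ((1 : ℤ) • x + (3 : ℤ) • y) by abel, show (((2 : ℤ) • y) - (x + y) : X) = (-(x - y)) by abel, show (3 • (x + y) : X) = ((3 : ℤ) • x + (3 : ℤ) • y) by abel, show (2 • (x + y) : X) = ((2 : ℤ) • x + (2 : ℤ) • y) by abel] at t
    rw [hev ((2 : ℤ) • x)] at t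
    rw [hev (x - y)] at t
    exact t
  have H13 : 3 • (Q ((2 : ℤ) • x + (6 : ℤ) • y) + Q ((2 : ℤ) • x + (2 : ℤ) • y)) - 12 • (Q ((1 : ℤ) • x + (4 : ℤ) • y) + Q x) - 4 • Q ((3 : ℤ) • x + (6 : ℤ) • y) + 18 • Q ((2 : ℤ) • x + (4 : ℤ) • y) - 36 • Q ((1 : ℤ) • x + (2 : ℤ) • y) + 18 • Q ((2 : ℤ) • y) = 0 := by
    have t := hD (((2 : ℤ) • y)) (((1 : ℤ) • x + (2 : ℤ) • y))
    simp only [Dop] at t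
    rw [show (((2 : ℤ) • y) + 2 • ((1 : ℤ) • x + (2 : ℤ) • y) : X) = ((2 : ℤ) • x + (6 : ℤ) • y) by abel, show (((2 : ℤ) • y) - 2 • ((1 : ℤ) • x + (2 : ℤ) • y) : X) = (-((2 : ℤ) • x + (2 : ℤ) • y)) by abel, show (((2 : ℤ) • y) + ((1 : ℤ) • x + (2 : ℤ) • y) : X) = ((1 : ℤ) • x + (4 : ℤ) • y) by abel, show (((2 : ℤ) • y) - ((1 : ℤ) • x + (2 : ℤ) • y) : X) = (-x) by abel, show (3 • ((1 : ℤ) • x + (2 : ℤ) • y) : X) = ((3 : ℤ) • x + (6 : ℤ) • y) by abel, show (2 • ((1 : ℤ) • x + (2 : ℤ) • y) : X) = ((2 : ℤ) • x + (4 : ℤ) • y) by abel] at t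
    rw [hev ((2 : ℤ) • x + (2 : ℤ) • y)] at t
    rw [hev x] at t
    exact t
  have H14 : 3 • (Q ((1 : ℤ) • x + (4 : ℤ) • y) + Q x) - 12 • (Q ((1 : ℤ) • x + (3 : ℤ) • y) + Q (x + y)) - 4 • Q ((3 : ℤ) • y) + 18 • Q ((2 : ℤ) • y) - 36 • Q y + 18 • Q ((1 : ℤ) • x + (2 : ℤ) • y) = 0 := by
    have t := hD (((1 : ℤ) • x + (2 : ℤ) • y)) (y)
    simp only [Dop] at t
    rw [show (((1 : ℤ) • x + (2 : ℤ) • y) + 2 • y : X) = ((1 : ℤ) • x + (4 : ℤ) • y) by abel, show (((1 : ℤ) • x + (2 : ℤ) • y) - 2 • y : X) = x by abel, show (((1 : ℤ) • x + (2 : ℤ) • y) + y : X) = ((1 : ℤ) • x + (3 : ℤ) • y) by abel, show (((1 : ℤ) • x + (2 : ℤ) • y) - y : X) = (x + y) by abel, show (3 • y : X) = ((3 : ℤ) • y) by abel, show (2 • y : X) = ((2 : ℤ) • y) by abel] at t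
    exact t
  have H15 : 3 • (Q ((3 : ℤ) • x + (-2 : ℤ) • y) + Q ((1 : ℤ) • x + (2 : ℤ) • y)) - 12 • (Q ((2 : ℤ) • x + (-2 : ℤ) • y) + Q ((2 : ℤ) • y)) - 4 • Q ((3 : ℤ) • x) + 18 • Q ((2 : ℤ) • x) - 36 • Q x + 18 • Q ((1 : ℤ) • x + (-2 : ℤ) • y) = 0 := by
    have t := hD (((1 : ℤ) • x + (-2 : ℤ) • y)) (x)
    simp only [Dop] at t
    rw [show (((1 : ℤ) • x + (-2 : ℤ) • y) + 2 • x : X) = ((3 : ℤ) • x + (-2 : ℤ) • y) by abel, show (((1 : ℤ) • x + (-2 : ℤ) • y) - 2 • x : X) = (-((1 : ℤ) • x + (2 : ℤ) • y)) by abel, show (((1 : ℤ) • x + (-2 : ℤ) • y) + x : X) = ((2 : ℤ) • x + (-2 : ℤ) • y) by abel, show (((1 : ℤ) • x + (-2 : ℤ) • y) - x : X) = (-((2 : ℤ) • y)) by abel, show (3 • x : X) = ((3 : ℤ) • x) by abel, show (2 • x : X) = ((2 : ℤ) • x) by abel] at t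
    rw [hev ((1 : ℤ) • x + (2 : ℤ) • y)] at t
    rw [hev ((2 : ℤ) • y)] at t
    exact t
  have H16 : 3 • (Q x + Q ((1 : ℤ) • x + (-4 : ℤ) • y)) - 12 • (Q (x - y) + Q ((1 : ℤ) • x + (-3 : ℤ) • y)) - 4 • Q ((3 : ℤ) • y) + 18 • Q ((2 : ℤ) • y) - 36 • Q y + 18 • Q ((1 : ℤ) • x + (-2 : ℤ) • y) = 0 := by
    have t := hD (((1 : ℤ) • x + (-2 : ℤ) • y)) (y)
    simp only [Dop] at t
    rw [show (((1 : ℤ) • x + (-2 : ℤ) • y) + 2 • y : X) = x by abel, show (((1 : ℤ) • x + (-2 : ℤ) • y) - 2 • y : X) = ((1 : ℤ) • x + (-4 : ℤ) • y) by abel, show (((1 : ℤ) • x + (-2 : ℤ) • y) + y : X) = (x - y) by abel, show (((1 : ℤ) • x + (-2 : ℤ) • y) - y : X) = ((1 : ℤ) • x + (-3 : ℤ) • y) by abel, show (3 • y : X) = ((3 : ℤ) • y) by abel, show (2 • y : X) = ((2 : ℤ) • y) by abel] at t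
    exact t
  have H17 : 3 • (Q ((4 : ℤ) • x + (-1 : ℤ) • y) + Q ((3 : ℤ) • y)) - 12 • (Q ((3 : ℤ) • x) + Q ((1 : ℤ) • x + (2 : ℤ) • y)) - 4 • Q ((3 : ℤ) • x + (-3 : ℤ) • y) + 18 • Q ((2 : ℤ) • x + (-2 : ℤ) • y) - 36 • Q (x - y) + 18 • Q ((2 : ℤ) • x + (1 : ℤ) • y) = 0 := by
    have t := hD (((2 : ℤ) • x + (1 : ℤ) • y)) ((x - y))
    simp only [Dop] at t
    rw [show (((2 : ℤ) • x + (1 : ℤ) • y) + 2 • (x - y) : X) = ((4 : ℤ) • x + (-1 : ℤ) • y) by abel, show (((2 : ℤ) • x + (1 : ℤ) • y) - 2 • (x - y) : X) = ((3 : ℤ) • y) by abel, show (((2 : ℤ) • x + (1 : ℤ) • y) + (x - y) : X) = ((3 : ℤ) • x) by abel, show (((2 : ℤ) • x + (1 : ℤ) • y) - (x - y) : X) = ((1 : ℤ) • x + (2 : ℤ) • y) by abel, show (3 • (x - y) : X) = ((3 : ℤ) • x + (-3 : ℤ) • y) by abel, show (2 • (x - y) : X) = ((2 : ℤ) • x +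 (-2 : ℤ) • y) by abel] at t
    exact t
  have H18 : 3 • (Q ((4 : ℤ) • x + (-1 : ℤ) • y) + Q y) - 12 • (Q ((3 : ℤ) • x + (-1 : ℤ) • y) + Q (x - y)) - 4 • Q ((3 : ℤ) • x) + 18 • Q ((2 : ℤ) • x) - 36 • Q x + 18 • Q ((2 : ℤ) • x + (-1 : ℤ) • y) = 0 := by
    have t := hD (((2 : ℤ) • x + (-1 : ℤ) • y)) (x)
    simp only [Dop] at t
    rw [show (((2 : ℤ) • x + (-1 : ℤ) • y) + 2 • x : X) = ((4 : ℤ) • x + (-1 : ℤ) • y) by abel, show (((2 : ℤ) • x + (-1 : ℤ) • y) - 2 • x : X) = (-y) by abel, show (((2 : ℤ) • x + (-1 : ℤ) • y) + x : X) = ((3 : ℤ) • x + (-1 : ℤ) • y) by abel, show (((2 : ℤ) • x + (-1 : ℤ) • y) - x : X) = (x - y) by abel, show (3 • x : X) = ((3 : ℤ) • x) by abel, show (2 • x : X) = ((2 : ℤ) • x) by abel] at t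
    rw [hev y] at t
    exact t
  have H19 : 3 • (Q ((2 : ℤ) • x + (4 : ℤ) • y) + Q ((2 : ℤ) • x)) - 12 • (Q ((2 : ℤ) • x + (3 : ℤ) • y) + Q ((2 : ℤ) • x + (1 : ℤ) • y)) - 4 • Q ((3 : ℤ) • y) + 18 • Q ((2 : ℤ) • y) - 36 • Q y + 18 • Q ((2 : ℤ) • x + (2 : ℤ) • y) = 0 := by
    have t := hD (((2 : ℤ) • x + (2 : ℤ) • y)) (y)
    simp only [Dop] at t
    rw [show (((2 : ℤ) • x + (2 : ℤ) • y) + 2 • y : X) = ((2 : ℤ) • x + (4 : ℤ) • y) by abel, show (((2 : ℤ) • x + (2 : ℤ) • y) - 2 • y : X) = ((2 : ℤ) • x) by abel, show (((2 : ℤ) • x + (2 : ℤ) • y) + y : X) = ((2 : ℤ) • x + (3 : ℤ) • y) by abel, show (((2 : ℤ) • x + (2 : ℤ) • y) - y : X) = ((2 : ℤ) • x + (1 : ℤ) • y) by abel, show (3 • y : X) = ((3 : ℤ) • y) by abel, show (2 • y : X) = ((2 : ℤ) • y) by abel] at t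
    exact t
  have H20 : 3 • (Q ((2 : ℤ) • x + (6 : ℤ) • y) + Q ((2 : ℤ) • x + (-2 : ℤ) • y)) - 12 • (Q ((2 : ℤ) • x + (4 : ℤ) • y) + Q ((2 : ℤ) • x)) - 4 • Q ((6 : ℤ) • y) + 18 • Q ((4 : ℤ) • y) - 36 • Q ((2 : ℤ) • y) + 18 • Q ((2 : ℤ) • x + (2 : ℤ) • y) = 0 := by
    have t := hD (((2 : ℤ) • x + (2 : ℤ) • y)) (((2 : ℤ) • y))
    simp only [Dop] at t
    rw [show (((2 : ℤ) • x + (2 : ℤ) • y) + 2 • ((2 : ℤ) • y) : X) = ((2 : ℤ) • x + (6 : ℤ) • y) by abel, show (((2 : ℤ) • x + (2 : ℤ) • y) - 2 • ((2 : ℤ) • y) : X) = ((2 : ℤ) • x + (-2 : ℤ) • y) by abel, show (((2 : ℤ) • x + (2 : ℤ) • y) + ((2 : ℤ) • y) : X) = ((2 : ℤ) • x + (4 : ℤ) • y) by abel, show (((2 : ℤ) • x + (2 : ℤ) • y) - ((2 : ℤ) • y) : X) = ((2 : ℤ) • x) by abel, show (3 • ((2 : ℤ) • y) : X) = ((6 :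 ℤ) • y) by abel, show (2 • ((2 : ℤ) • y) : X) = ((4 : ℤ) • y) by abel] at t
    exact t
  have H21 : 3 • (Q ((3 : ℤ) • x + (2 : ℤ) • y) + Q ((3 : ℤ) • x + (-2 : ℤ) • y)) - 12 • (Q ((3 : ℤ) • x + (1 : ℤ) • y) + Q ((3 : ℤ) • x + (-1 : ℤ) • y)) - 4 • Q ((3 : ℤ) • y) + 18 • Q ((2 : ℤ) • y) - 36 • Q y + 18 • Q ((3 : ℤ) • x) = 0 := by
    have t := hD (((3 : ℤ) • x)) (y)
    simp only [Dop] at t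
    rw [show (((3 : ℤ) • x) + 2 • y : X) = ((3 : ℤ) • x + (2 : ℤ) • y) by abel, show (((3 : ℤ) • x) - 2 • y : X) = ((3 : ℤ) • x + (-2 : ℤ) • y) by abel, show (((3 : ℤ) • x) + y : X) = ((3 : ℤ) • x + (1 : ℤ) • y) by abel, show (((3 : ℤ) • x) - y : X) = ((3 : ℤ) • x + (-1 : ℤ) • y) by abel, show (3 • y : X) = ((3 : ℤ) • y) by abel, show (2 • y : X) = ((2 : ℤ) • y) by abel] at t
    exact t
  have H22 : 3 • (Q ((2 : ℤ) • x) + Q ((2 : ℤ) • x)) - 12 • (Q x + Q x) - 4 • Q ((3 : ℤ) • x) + 18 • Q ((2 : ℤ) • x) - 36 • Q x + 18 • (0 : Y) = 0 := by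
    have t := hD ((0 : X)) (x)
    simp only [Dop] at t
    rw [show ((0 : X) + 2 • x : X) = ((2 : ℤ) • x) by abel, show ((0 : X) - 2 • x : X) = (-((2 : ℤ) • x)) by abel, show ((0 : X) + x : X) = x by abel, show ((0 : X) - x : X) = (-x) by abel, show (3 • x : X) = ((3 : ℤ) • x) by abel, show (2 • x : X) = ((2 : ℤ) • x) by abel] at t
    rw [hev ((2 : ℤ) • x)] at t
    rw [hev x] at t
    rw [h0] at t
    exact t
  have H23 : 3 • (Q ((2 : ℤ) • x + (2 : ℤ) • y) + Q ((2 : ℤ) • x + (2 : ℤ) • y)) - 12 • (Q (x + y) + Q (x + y)) - 4 • Q ((3 : ℤ) • x + (3 : ℤ) • y) + 18 • Q ((2 : ℤ) • x + (2 : ℤ) • y) - 36 • Q (x + y) + 18 • (0 : Y) = 0 := by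
    have t := hD ((0 : X)) ((x + y))
    simp only [Dop] at t
    rw [show ((0 : X) + 2 • (x + y) : X) = ((2 : ℤ) • x + (2 : ℤ) • y) by abel, show ((0 : X) - 2 • (x + y) : X) = (-((2 : ℤ) • x + (2 : ℤ) • y)) by abel, show ((0 : X) + (x + y) : X) = (x + y) by abel, show ((0 : X) - (x + y) : X) = (-(x + y)) by abel, show (3 • (x + y) : X) = ((3 : ℤ) • x + (3 : ℤ) • y) by abel, show (2 • (x + y) : X) = ((2 : ℤ) • x + (2 : ℤ) • y) by abel] at t
    rw [hev ((2 : ℤ) • x + (2 : ℤ) • y)] at t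
    rw [hev (x + y)] at t
    rw [h0] at t
    exact t
  have H24 : 3 • (Q ((2 : ℤ) • x + (4 : ℤ) • y) + Q ((2 : ℤ) • x + (4 : ℤ) • y)) - 12 • (Q ((1 : ℤ) • x + (2 : ℤ) • y) + Q ((1 : ℤ) • x + (2 : ℤ) • y)) - 4 • Q ((3 : ℤ) • x + (6 : ℤ) • y) + 18 • Q ((2 : ℤ) • x + (4 : ℤ) • y) - 36 • Q ((1 : ℤ) • x + (2 : ℤ) • y) + 18 • (0 : Y) = 0 := by
    have t := hD ((0 : X)) (((1 : ℤ) • x + (2 : ℤ) • y))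
    simp only [Dop] at t
    rw [show ((0 : X) + 2 • ((1 : ℤ) • x + (2 : ℤ) • y) : X) = ((2 : ℤ) • x + (4 : ℤ) • y) by abel, show ((0 : X) - 2 • ((1 : ℤ) • x + (2 : ℤ) • y) : X) = (-((2 : ℤ) • x + (4 : ℤ) • y)) by abel, show ((0 : X) + ((1 : ℤ) • x + (2 : ℤ) • y) : X) = ((1 : ℤ) • x + (2 : ℤ) • y) by abel, show ((0 : X) - ((1 : ℤ) • x + (2 : ℤ) • y) : X) = (-((1 : ℤ) • x + (2 : ℤ) • y)) by abel, show (3 • ((1 : ℤ) • x + (2 : ℤ) • y) : X) = ((3 : ℤ) • x + (6 : ℤ) • y) by abel, show (2 • ((1 : ℤ) • x + (2 : ℤ) • y) : X) = ((2 : ℤ) • x + (4 : ℤ) • y) by abel] at t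
    rw [hev ((2 : ℤ) • x + (4 : ℤ) • y)] at t
    rw [hev ((1 : ℤ) • x + (2 : ℤ) • y)] at t
    rw [h0] at t
    exact t
  have H25 : 3 • (Q ((2 : ℤ) • x + (-4 : ℤ) • y) + Q ((2 : ℤ) • x + (-4 : ℤ) • y)) - 12 • (Q ((1 : ℤ) • x + (-2 : ℤ) • y) + Q ((1 : ℤ) • x + (-2 : ℤ) • y)) - 4 • Q ((3 : ℤ) • x + (-6 : ℤ) • y) + 18 • Q ((2 : ℤ) • x + (-4 : ℤ) • y) - 36 • Q ((1 : ℤ) • x + (-2 : ℤ) • y) + 18 • (0 : Y) = 0 := by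
    have t := hD ((0 : X)) (((1 : ℤ) • x + (-2 : ℤ) • y))
    simp only [Dop] at t
    rw [show ((0 : X) + 2 • ((1 : ℤ) • x + (-2 : ℤ) • y) : X) = ((2 : ℤ) • x + (-4 : ℤ) • y) by abel, show ((0 : X) - 2 • ((1 : ℤ) • x + (-2 : ℤ) • y) : X) = (-((2 : ℤ) • x + (-4 : ℤ) • y)) by abel, show ((0 : X) + ((1 : ℤ) • x + (-2 : ℤ) • y) : X) = ((1 : ℤ) • x + (-2 : ℤ) • y) by abel, show ((0 : X) - ((1 : ℤ) • x + (-2 : ℤ) • y) : X) = (-((1 : ℤ) • x + (-2 : ℤ) • y)) by abel, show (3 • ((1 : ℤ) • x + (-2 : ℤ) • y) : X) = ((3 : ℤ) • x + (-6 : ℤ) • y) by abel, show (2 • ((1 : ℤ) • x + (-2 : ℤ) • y) : X) = ((2 : ℤ) • x + (-4 : ℤ) • y) by abel] at t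
    rw [hev ((2 : ℤ) • x + (-4 : ℤ) • y)] at t
    rw [hev ((1 : ℤ) • x + (-2 : ℤ) • y)] at t
    rw [h0] at t
    exact t
  have key : ((Q ((2 : ℤ) • x + (2 : ℤ) • y) - 16 • Q (x + y)) + (Q ((2 : ℤ) • x + (-2 : ℤ) • y) - 16 • Q (x - y))) - (2 • (Q ((2 : ℤ) • x) - 16 • Q x) + 2 • (Q ((2 : ℤ) • y) - 16 • Q y)) =
      (-2/7 : ℝ) • (3 • (Q ((3 : ℤ) • x + (2 : ℤ) • y) + Q ((1 : ℤ) • x + (2 : ℤ) • y)) - 12 • (Q ((2 : ℤ) • x + (1 : ℤ) • y) + Q y) - 4 • Q ((3 : ℤ) • x + (3 : ℤ) • y) + 18 • Q ((2 : ℤ) • x + (2 : ℤ) • y) - 36 • Q (x + y) + 18 • Q x) + (-2/7 : ℝ) • (3 • (Q ((1 : ℤ) • x + (4 : ℤ) • y) + Q ((1 : ℤ) • x + (-4 : ℤ) • y)) - 12 • (Q ((1 : ℤ) • x + (2 : ℤ) • y) + Q ((1 : ℤ) • x + (-2 : ℤ) • y)) - 4 • Q ((6 : ℤ) • y) + 18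 • Q ((4 : ℤ) • y) - 36 • Q ((2 : ℤ) • y) + 18 • Q x) + (-34/21 : ℝ) • (3 • (Q ((3 : ℤ) • y) + Q y) - 12 • (Q ((2 : ℤ) • y) + (0 : Y)) - 4 • Q ((3 : ℤ) • y) + 18 • Q ((2 : ℤ) • y) - 36 • Q y + 18 • Q y) + (-16/7 : ℝ) • (3 • (Q ((2 : ℤ) • x + (3 : ℤ) • y) + Q ((2 : ℤ) • x + (1 : ℤ) • y)) - 12 • (Q ((1 : ℤ) • x + (2 : ℤ) • y) + Q x) - 4 • Q ((3 : ℤ) • x + (3 : ℤ) • y) + 18 • Q ((2 : ℤ) • x + (2 : ℤ) • y) - 36 • Q (x + y) + 18 • Q y) + (8/7 : ℝ) • (3 • (Q ((3 : ℤ) • x + (1 : ℤ) • y) + Q (x - y)) - 12 • (Q ((2 : ℤ) • x + (1 : ℤ) • y) + Q y) - 4 • Q ((3 : ℤ) • x) + 18 • Q ((2 : ℤ) • x) - 36 • Q x + 18 • Q (x + y)) + (-8/21 : ℝ) • (3 • (Q ((1 : ℤ) • x + (5 : ℤ) • y) + Q ((1 : ℤ) • x + (-3 : ℤ) • y)) -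 12 • (Q ((1 : ℤ) • x + (3 : ℤ) • y) + Q (x - y)) - 4 • Q ((6 : ℤ) • y) + 18 • Q ((4 : ℤ) • y) - 36 • Q ((2 : ℤ) • y) + 18 • Q (x + y)) + (8/21 : ℝ) • (3 • (Q ((3 : ℤ) • x + (-3 : ℤ) • y) + Q ((1 : ℤ) • x + (-5 : ℤ) • y)) - 12 • (Q ((2 : ℤ) • x + (-1 : ℤ) • y) + Q ((3 : ℤ) • y)) - 4 • Q ((3 : ℤ) • x + (-6 : ℤ) • y) + 18 • Q ((2 : ℤ) • x + (-4 : ℤ) • y) - 36 • Q ((1 : ℤ) • x + (-2 : ℤ) • y) + 18 • Q (x + y)) + (-8/21 : ℝ) • (3 • (Q ((1 : ℤ) • x + (3 : ℤ) • y) + Q ((1 : ℤ) • x + (-5 : ℤ) • y)) - 12 • (Q (x + y) + Q ((1 : ℤ) • x + (-3 : ℤ) • y)) - 4 • Q ((6 : ℤ) • y) + 18 • Q ((4 : ℤ) • y) - 36 • Q ((2 : ℤ) • y) + 18 • Q (x - y)) + (8/21 : ℝ) • (3 • (Q ((3 : ℤ) • x + (3 : ℤ) • y) + Q ((1 : ℤ)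 • x + (5 : ℤ) • y)) - 12 • (Q ((2 : ℤ) • x + (1 : ℤ) • y) + Q ((3 : ℤ) • y)) - 4 • Q ((3 : ℤ) • x + (6 : ℤ) • y) + 18 • Q ((2 : ℤ) • x + (4 : ℤ) • y) - 36 • Q ((1 : ℤ) • x + (2 : ℤ) • y) + 18 • Q (x - y)) + (-17/21 : ℝ) • (3 • (Q ((2 : ℤ) • x + (2 : ℤ) • y) + Q ((2 : ℤ) • x + (-2 : ℤ) • y)) - 12 • (Q ((2 : ℤ) • x + (1 : ℤ) • y) + Q ((2 : ℤ) • x + (-1 : ℤ) • y)) - 4 • Q ((3 : ℤ) • y) + 18 • Q ((2 : ℤ) • y) - 36 • Q y + 18 • Q ((2 : ℤ) • x)) + (16/21 : ℝ) • (3 • (Q ((2 : ℤ) • x + (4 : ℤ) • y) + Q ((2 : ℤ) • x + (-4 : ℤ) • y)) - 12 • (Q ((2 : ℤ) • x + (2 : ℤ) • y) + Q ((2 : ℤ) • x + (-2 : ℤ) • y)) - 4 • Q ((6 : ℤ) • y) + 18 • Q ((4 : ℤ) • y) - 36 • Q ((2 : ℤ) • y) + 18 • Q ((2 : ℤ) •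 x)) + (22/21 : ℝ) • (3 • (Q ((2 : ℤ) • x + (2 : ℤ) • y) + Q ((2 : ℤ) • x + (-2 : ℤ) • y)) - 12 • (Q ((1 : ℤ) • x + (2 : ℤ) • y) + Q ((1 : ℤ) • x + (-2 : ℤ) • y)) - 4 • Q ((3 : ℤ) • x) + 18 • Q ((2 : ℤ) • x) - 36 • Q x + 18 • Q ((2 : ℤ) • y)) + (8/7 : ℝ) • (3 • (Q ((2 : ℤ) • x + (4 : ℤ) • y) + Q ((2 : ℤ) • x)) - 12 • (Q ((1 : ℤ) • x + (3 : ℤ) • y) + Q (x - y)) - 4 • Q ((3 : ℤ) • x + (3 : ℤ) • y) + 18 • Q ((2 : ℤ) • x + (2 : ℤ) • y) - 36 • Q (x + y) + 18 • Q ((2 : ℤ) • y)) + (-2/7 : ℝ) • (3 • (Q ((2 : ℤ) • x + (6 : ℤ) • y) + Q ((2 : ℤ) • x + (2 : ℤ) • y)) - 12 • (Q ((1 : ℤ) • x + (4 : ℤ) • y) + Q x) - 4 • Q ((3 : ℤ) • x + (6 : ℤ) • y) + 18 • Q ((2 : ℤ) • x + (4 : ℤ) • y) - 36 • Q ((1 :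 ℤ) • x + (2 : ℤ) • y) + 18 • Q ((2 : ℤ) • y)) + (-6/7 : ℝ) • (3 • (Q ((1 : ℤ) • x + (4 : ℤ) • y) + Q x) - 12 • (Q ((1 : ℤ) • x + (3 : ℤ) • y) + Q (x + y)) - 4 • Q ((3 : ℤ) • y) + 18 • Q ((2 : ℤ) • y) - 36 • Q y + 18 • Q ((1 : ℤ) • x + (2 : ℤ) • y)) + (-2/7 : ℝ) • (3 • (Q ((3 : ℤ) • x + (-2 : ℤ) • y) + Q ((1 : ℤ) • x + (2 : ℤ) • y)) - 12 • (Q ((2 : ℤ) • x + (-2 : ℤ) • y) + Q ((2 : ℤ) • y)) - 4 • Q ((3 : ℤ) • x) + 18 • Q ((2 : ℤ) • x) - 36 • Q x + 18 • Q ((1 : ℤ) • x + (-2 : ℤ) • y)) + (2/7 : ℝ) • (3 • (Q x + Q ((1 : ℤ) • x + (-4 : ℤ) • y)) - 12 • (Q (x - y) + Q ((1 : ℤ) • x + (-3 : ℤ) • y)) - 4 • Q ((3 : ℤ) • y) + 18 • Q ((2 : ℤ) • y) - 36 • Q y + 18 • Q ((1 : ℤ) • x + (-2 : ℤ) • y))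 + (2/7 : ℝ) • (3 • (Q ((4 : ℤ) • x + (-1 : ℤ) • y) + Q ((3 : ℤ) • y)) - 12 • (Q ((3 : ℤ) • x) + Q ((1 : ℤ) • x + (2 : ℤ) • y)) - 4 • Q ((3 : ℤ) • x + (-3 : ℤ) • y) + 18 • Q ((2 : ℤ) • x + (-2 : ℤ) • y) - 36 • Q (x - y) + 18 • Q ((2 : ℤ) • x + (1 : ℤ) • y)) + (-2/7 : ℝ) • (3 • (Q ((4 : ℤ) • x + (-1 : ℤ) • y) + Q y) - 12 • (Q ((3 : ℤ) • x + (-1 : ℤ) • y) + Q (x - y)) - 4 • Q ((3 : ℤ) • x) + 18 • Q ((2 : ℤ) • x) - 36 • Q x + 18 • Q ((2 : ℤ) • x + (-1 : ℤ) • y)) + (-4/7 : ℝ) • (3 • (Q ((2 : ℤ) • x + (4 : ℤ) • y) + Q ((2 : ℤ) • x)) - 12 • (Q ((2 : ℤ) • x + (3 : ℤ) • y) + Q ((2 : ℤ) • x + (1 : ℤ) • y)) - 4 • Q ((3 : ℤ) • y) + 18 • Q ((2 : ℤ) • y) - 36 • Q y + 18 • Q ((2 : ℤ) • x + (2 : ℤ)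 • y)) + (2/7 : ℝ) • (3 • (Q ((2 : ℤ) • x + (6 : ℤ) • y) + Q ((2 : ℤ) • x + (-2 : ℤ) • y)) - 12 • (Q ((2 : ℤ) • x + (4 : ℤ) • y) + Q ((2 : ℤ) • x)) - 4 • Q ((6 : ℤ) • y) + 18 • Q ((4 : ℤ) • y) - 36 • Q ((2 : ℤ) • y) + 18 • Q ((2 : ℤ) • x + (2 : ℤ) • y)) + (2/7 : ℝ) • (3 • (Q ((3 : ℤ) • x + (2 : ℤ) • y) + Q ((3 : ℤ) • x + (-2 : ℤ) • y)) - 12 • (Q ((3 : ℤ) • x + (1 : ℤ) • y) + Q ((3 : ℤ) • x + (-1 : ℤ) • y)) - 4 • Q ((3 : ℤ) • y) + 18 • Q ((2 : ℤ) • y) - 36 • Q y + 18 • Q ((3 : ℤ) • x)) + (-25/21 : ℝ) • (3 • (Q ((2 : ℤ) • x) + Q ((2 : ℤ) • x)) - 12 • (Q x + Q x) - 4 • Q ((3 : ℤ) • x) + 18 • Q ((2 : ℤ) • x) - 36 • Q x + 18 • (0 : Y)) + (12/7 : ℝ) • (3 • (Q ((2 : ℤ) • x + (2 : ℤ) • y)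 + Q ((2 : ℤ) • x + (2 : ℤ) • y)) - 12 • (Q (x + y) + Q (x + y)) - 4 • Q ((3 : ℤ) • x + (3 : ℤ) • y) + 18 • Q ((2 : ℤ) • x + (2 : ℤ) • y) - 36 • Q (x + y) + 18 • (0 : Y)) + (-2/21 : ℝ) • (3 • (Q ((2 : ℤ) • x + (4 : ℤ) • y) + Q ((2 : ℤ) • x + (4 : ℤ) • y)) - 12 • (Q ((1 : ℤ) • x + (2 : ℤ) • y) + Q ((1 : ℤ) • x + (2 : ℤ) • y)) - 4 • Q ((3 : ℤ) • x + (6 : ℤ) • y) + 18 • Q ((2 : ℤ) • x + (4 : ℤ) • y) - 36 • Q ((1 : ℤ) • x + (2 : ℤ) • y) + 18 • (0 : Y)) + (-8/21 : ℝ) • (3 • (Q ((2 : ℤ) • x + (-4 : ℤ) • y) + Q ((2 : ℤ) • x + (-4 : ℤ) • y)) - 12 • (Q ((1 : ℤ) • x + (-2 : ℤ) • y) + Q ((1 : ℤ) • x + (-2 : ℤ) • y)) - 4 • Q ((3 : ℤ) • x + (-6 : ℤ) • y) + 18 • Q ((2 : ℤ) • x + (-4 : ℤ) • y) - 36 • Q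 ((1 : ℤ) • x + (-2 : ℤ) • y) + 18 • (0 : Y)) := by
    module
  rw [H0, H1, H2, H3, H4, H5, H6, H7, H8, H9, H10, H11, H12, H13, H14, H15, H16, H17, H18, H19, H20, H21, H22, H23, H24, H25] at key
  have key2 : (Q ((2 : ℤ) • x + (2 : ℤ) • y) - 16 • Q (x + y)) + (Q ((2 : ℤ) • x + (-2 : ℤ) • y) - 16 • Q (x - y)) = 2 • (Q ((2 : ℤ) • x) - 16 • Q x) + 2 • (Q ((2 : ℤ) • y) - 16 • Q y) := by
    rw [← sub_eq_zero, key]; simp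
  rw [show (2 • (x + y) : X) = ((2 : ℤ) • x + (2 : ℤ) • y) by abel, show (2 • (x - y) : X) = ((2 : ℤ) • x + (-2 : ℤ) • y) by abel,
    show (2 • x : X) = ((2 : ℤ) • x) by abel, show (2 • y : X) = ((2 : ℤ) • y) by abel]
  exact key2

set_option maxHeartbeats 1600000 in
theorem stmt_8 {X Y : Type*} [AddCommGroup X] [Module ℝ X]
    [NormedAddCommGroup Y] [NormedSpace ℝ Y] [CompleteSpace Y]
    (f : X → Y) (heven : ∀ x : X, f (-x) = f x)
    (φ : X → X → ℝ) (hφ0 : ∀ x y : X, 0 ≤ φ x y)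
    (hbd : ∀ x y : X, ‖Dop f x y‖ ≤ φ x y)
    (hsum : ∀ x : X, Summable fun i : ℕ =>
      (4 : ℝ) ^ (i + 1) *
        (φ (((2 : ℝ) ^ (i + 1))⁻¹ • x) (((2 : ℝ) ^ (i + 2))⁻¹ • x) +
          φ (((2 : ℝ) ^ (i + 1))⁻¹ • x) (((2 : ℝ) ^ (i + 1))⁻¹ • x)))
    (hlim : ∀ x y : X, Tendsto
      (fun n : ℕ => (4 : ℝ) ^ n * φ (((2 : ℝ) ^ n)⁻¹ • x) (((2 : ℝ) ^ n)⁻¹ • y)) atTop (𝓝 0)) :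
    ∃ Q₁ : X → Y,
      (∀ x : X, Tendsto (fun n : ℕ =>
        (4 : ℝ) ^ n • (f (((2 : ℝ) ^ n)⁻¹ • (2 • x)) - 16 • f (((2 : ℝ) ^ n)⁻¹ • x)))
        atTop (𝓝 (Q₁ x))) ∧
      IsQuadratic Q₁ ∧ MixedEq Q₁ ∧
      (∀ x : X, ‖f (2 • x) - 16 • f x - Q₁ x‖ ≤
        ∑' i : ℕ, (4 : ℝ) ^ i *
          ((1 / 3) * φ (((2 : ℝ) ^ i)⁻¹ • x) (((2 : ℝ) ^ (i + 1))⁻¹ • x) +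
            (16 / 3) * φ (((2 : ℝ) ^ (i + 1))⁻¹ • x) (((2 : ℝ) ^ (i + 1))⁻¹ • x))) ∧
      (∀ Q₁' : X → Y, IsQuadratic Q₁' → MixedEq Q₁' →
        (∀ x : X, ‖f (2 • x) - 16 • f x - Q₁' x‖ ≤
          ∑' i : ℕ, (4 : ℝ) ^ i *
            ((1 / 3) * φ (((2 : ℝ) ^ i)⁻¹ • x) (((2 : ℝ) ^ (i + 1))⁻¹ • x) +
              (16 / 3) * φ (((2 : ℝ) ^ (i + 1))⁻¹ • x) (((2 : ℝ) ^ (i + 1))⁻¹ • x))) →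
        Q₁' = Q₁) := by
  classical
  -- φ 0 0 = 0
  have hφ00 : φ 0 0 = 0 := by
    have h1 : Tendsto (fun n : ℕ => (4:ℝ)^n * φ 0 0) atTop (𝓝 0) := by
      simpa using hlim 0 0
    have h2 : φ 0 0 ≤ 0 := ge_of_tendsto' h1 (fun n =>
      le_mul_of_one_le_left (hφ0 0 0) (one_le_pow₀ (by norm_num)))
    exact le_antisymm h2 (hφ0 0 0)
  -- f 0 = 0
  have hf0 : f 0 = 0 := by
    have hD00 : ‖Dop f 0 0‖ ≤ 0 := hφ00 ▸ hbd 0 0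
    have h22 : Dop f 0 0 = (-22 : ℝ) • f 0 := by
      simp only [Dop, smul_zero, add_zero, zero_add, sub_zero, sub_self]
      module
    rw [h22] at hD00
    have h0 : (-22 : ℝ) • f 0 = 0 := norm_le_zero_iff.mp hD00
    rcases smul_eq_zero.mp h0 with h | h
    · norm_num at h
    · exact h
  set g : X → Y := fun v => f (2 • v) - 16 • f v with hg_def
  have key3 : ∀ v : X, (3:ℝ) • (g (2 • v) - (4:ℝ) • g v)
      = Dop f (2 • v) v - (16:ℝ) • Dop f v v := by
    intro v
    simp only [hg_def, Dop]
    rw [show (2•(2•v) : X) = (4:ℤ)•v by abel,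
        show (2•v + 2•v : X) = (4:ℤ)•v by abel,
        show (2•v - 2•v : X) = (0:X) by abel,
        show (2•v + v : X) = (3:ℤ)•v by abel,
        show (2•v - v : X) = v by abel,
        show (v + 2•v : X) = (3:ℤ)•v by abel,
        show (v - 2•v : X) = -v by abel,
        show (v + v : X) = (2:ℤ)•v by abel,
        show (v - v : X) = (0:X) by abel,
        show (3•v : X) = (3:ℤ)•v by abel,
        show (2•v : X) = (2:ℤ)•v by abel]
    rw [heven v, hf0]
    module
  have hg_est : ∀ v : X, ‖g (2 • v) - (4:ℝ) • g v‖
      ≤ (1/3) * φ (2 • v) v + (16/3) * φ v v := by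
    intro v
    have h3 : ‖(3:ℝ) • (g (2•v) - (4:ℝ) • g v)‖ ≤ φ (2•v) v + 16 * φ v v := by
      rw [key3 v]
      calc ‖Dop f (2•v) v - (16:ℝ) • Dop f v v‖
          ≤ ‖Dop f (2•v) v‖ + ‖(16:ℝ) • Dop f v v‖ := norm_sub_le _ _
        _ ≤ φ (2•v) v + 16 * φ v v := by
            rw [norm_smul, Real.norm_eq_abs]
            have h1 := hbd (2•v) v
            have h2 := hbd v v
            have : |(16:ℝ)| = 16 := by norm_num
            rw [this]
            nlinarith [norm_nonneg (Dop f v v)]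
    rw [norm_smul, Real.norm_eq_abs] at h3
    have : |(3:ℝ)| = 3 := by norm_num
    rw [this] at h3
    linarith
  set d : X → ℕ → ℝ := fun x i => (4:ℝ)^i *
      ((1/3) * φ (((2:ℝ)^i)⁻¹ • x) (((2:ℝ)^(i+1))⁻¹ • x) +
        (16/3) * φ (((2:ℝ)^(i+1))⁻¹ • x) (((2:ℝ)^(i+1))⁻¹ • x)) with hd_def
  have hd0 : ∀ (x : X) (i : ℕ), 0 ≤ d x i := by
    intro x i
    rw [hd_def]
    have := hφ0 (((2:ℝ)^i)⁻¹ • x) (((2:ℝ)^(i+1))⁻¹ • x)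
    have := hφ0 (((2:ℝ)^(i+1))⁻¹ • x) (((2:ℝ)^(i+1))⁻¹ • x)
    positivity
  have hd_sum : ∀ x : X, Summable (d x) := by
    intro x
    rw [← summable_nat_add_iff 1]
    refine Summable.of_nonneg_of_le (fun i => hd0 x (i+1)) (fun i => ?_)
      (((hsum x).add ((summable_nat_add_iff 1).mpr (hsum x))).mul_left ((16:ℝ)/3))
    simp only [hd_def]
    rw [show i + 1 + 1 = i + 2 from rfl, show i + 1 + 2 = i + 3 from rfl]
    have h1 := hφ0 (((2:ℝ)^(i+1))⁻¹ • x) (((2:ℝ)^(i+2))⁻¹ • x)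
    have h2 := hφ0 (((2:ℝ)^(i+2))⁻¹ • x) (((2:ℝ)^(i+2))⁻¹ • x)
    have h2' := hφ0 (((2:ℝ)^(i+1))⁻¹ • x) (((2:ℝ)^(i+1))⁻¹ • x)
    have h2'' := hφ0 (((2:ℝ)^(i+2))⁻¹ • x) (((2:ℝ)^(i+3))⁻¹ • x)
    have h3 : (0:ℝ) ≤ (4:ℝ)^(i+1) := by positivity
    have hp : (4:ℝ)^(i+2) = 4 * 4^(i+1) := by ring
    nlinarith [mul_nonneg h3 h1, mul_nonneg h3 h2, mul_nonneg h3 h2', mul_nonneg h3 h2'']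
  set a : X → ℕ → Y := fun x n => (4:ℝ)^n • g (((2:ℝ)^n)⁻¹ • x) with ha_def
  have hhalf : ∀ (x : X) (n : ℕ), ((2:ℝ)^n)⁻¹ • x = 2 • (((2:ℝ)^(n+1))⁻¹ • x) := by
    intro x n
    rw [← Nat.cast_smul_eq_nsmul ℝ, smul_smul]
    congr 1
    rw [pow_succ, mul_inv]
    push_cast
    field_simp
  have hstep : ∀ (x : X) (n : ℕ), dist (a x n) (a x (n+1)) ≤ d x n := by
    intro x n
    have hp : (0:ℝ) ≤ (4:ℝ)^n := by positivity
    have heq : a x n - a x (n+1) = (4:ℝ)^n •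
        (g (2 • (((2:ℝ)^(n+1))⁻¹ • x)) - (4:ℝ) • g (((2:ℝ)^(n+1))⁻¹ • x)) := by
      simp only [ha_def]
      rw [hhalf x n, pow_succ]
      module
    rw [dist_eq_norm, heq, norm_smul, Real.norm_eq_abs, abs_of_nonneg hp]
    simp only [hd_def]
    rw [hhalf x n]
    exact mul_le_mul_of_nonneg_left (hg_est (((2:ℝ)^(n+1))⁻¹ • x)) hp
  have hQex : ∀ x : X, ∃ q : Y, Tendsto (a x) atTop (𝓝 q) := by
    intro x
    refine cauchySeq_tendsto_of_complete (cauchySeq_of_summable_dist ?_)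
    exact Summable.of_nonneg_of_le (fun n => dist_nonneg) (hstep x) (hd_sum x)
  choose Q₁ hQ using hQex
  -- error bound
  have hQbound : ∀ x : X, ‖g x - Q₁ x‖ ≤ ∑' i, d x i := by
    intro x
    have ha0 : a x 0 = g x := by
      simp only [ha_def]
      norm_num
    have := dist_le_tsum_of_dist_le_of_tendsto₀ (d x) (hstep x) (hd_sum x) (hQ x)
    rwa [ha0, dist_eq_norm] at this
  -- Q₁ is even
  have hQev : ∀ x : X, Q₁ (-x) = Q₁ x := by
    intro x
    have hgev : ∀ v : X, g (-v) = g v := by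
      intro v
      simp only [hg_def]
      rw [show (2 • (-v) : X) = -(2 • v) by abel, heven (2 • v), heven v]
    have : a (-x) = a x := by
      funext n
      simp only [ha_def, smul_neg]
      rw [hgev]
    exact tendsto_nhds_unique (this ▸ hQ (-x)) (hQ x)
  -- Q₁ 0 = 0
  have hQzero : Q₁ 0 = 0 := by
    have : a 0 = fun _ => (0:Y) := by
      funext n
      simp only [ha_def, smul_zero]
      rw [show g 0 = 0 from by simp only [hg_def]; rw [smul_zero, hf0]; simp]
      rw [smul_zero]
    exact tendsto_nhds_unique (this ▸ hQ 0) tendsto_const_nhds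
  -- doubling
  have hQdouble : ∀ x : X, Q₁ (2 • x) = (4:ℝ) • Q₁ x := by
    intro x
    have h1 : ∀ n : ℕ, a (2 • x) (n + 1) = (4:ℝ) • a x n := by
      intro n
      simp only [ha_def]
      rw [show ((2:ℝ)^(n+1))⁻¹ • (2 • x) = ((2:ℝ)^n)⁻¹ • x by
            rw [hhalf x n, ← Nat.cast_smul_eq_nsmul ℝ, ← Nat.cast_smul_eq_nsmul ℝ,
              smul_comm]]
      rw [pow_succ]
      module
    have h2 : Tendsto (fun n => a (2 • x) (n + 1)) atTop (𝓝 (Q₁ (2 • x))) :=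
      (hQ (2 • x)).comp (tendsto_add_atTop_nat 1)
    rw [funext h1] at h2
    exact tendsto_nhds_unique h2 ((hQ x).const_smul (4:ℝ))
  -- Dop of g
  have hDg : ∀ u v : X, Dop g u v = Dop f (2 • u) (2 • v) - (16:ℝ) • Dop f u v := by
    intro u v
    simp only [hg_def, Dop]
    rw [show (2•u + 2•(2•v) : X) = 2•(u + 2•v) by abel,
        show (2•u - 2•(2•v) : X) = 2•(u - 2•v) by abel,
        show (2•u + 2•v : X) = 2•(u + v) by abel,
        show (2•u - 2•v : X) = 2•(u - v) by abel,
        show (3•(2•v) : X) = 2•(3•v) by abel]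
    module
  -- Dop of Q₁ vanishes
  have hDQ : ∀ x y : X, Dop Q₁ x y = 0 := by
    intro x y
    have hfun : ∀ n : ℕ, (3:ℝ) • (a (x + 2•y) n + a (x - 2•y) n)
        - (12:ℝ) • (a (x+y) n + a (x-y) n) - (4:ℝ) • a (3•y) n + (18:ℝ) • a (2•y) n
        - (36:ℝ) • a y n + (18:ℝ) • a x n
        = (4:ℝ)^n • Dop g (((2:ℝ)^n)⁻¹ • x) (((2:ℝ)^n)⁻¹ • y) := by
      intro n
      simp only [ha_def, Dop]
      rw [show (((2:ℝ)^n)⁻¹ • x) + 2 • (((2:ℝ)^n)⁻¹ • y) = ((2:ℝ)^n)⁻¹ • (x + 2•y) from by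
            module,
          show (((2:ℝ)^n)⁻¹ • x) - 2 • (((2:ℝ)^n)⁻¹ • y) = ((2:ℝ)^n)⁻¹ • (x - 2•y) from by
            module,
          show (((2:ℝ)^n)⁻¹ • x) + (((2:ℝ)^n)⁻¹ • y) = ((2:ℝ)^n)⁻¹ • (x + y) from by
            module,
          show (((2:ℝ)^n)⁻¹ • x) - (((2:ℝ)^n)⁻¹ • y) = ((2:ℝ)^n)⁻¹ • (x - y) from by
            module,
          show 3 • (((2:ℝ)^n)⁻¹ • y) = ((2:ℝ)^n)⁻¹ • (3•y) from by module,
          show 2 • (((2:ℝ)^n)⁻¹ • y) = ((2:ℝ)^n)⁻¹ • (2•y) from by module]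
      module
    have hten : Tendsto (fun n : ℕ => (3:ℝ) • (a (x + 2•y) n + a (x - 2•y) n)
        - (12:ℝ) • (a (x+y) n + a (x-y) n) - (4:ℝ) • a (3•y) n + (18:ℝ) • a (2•y) n
        - (36:ℝ) • a y n + (18:ℝ) • a x n) atTop
        (𝓝 ((3:ℝ) • (Q₁ (x + 2•y) + Q₁ (x - 2•y))
        - (12:ℝ) • (Q₁ (x+y) + Q₁ (x-y)) - (4:ℝ) • Q₁ (3•y) + (18:ℝ) • Q₁ (2•y)
        - (36:ℝ) • Q₁ y + (18:ℝ) • Q₁ x)) := by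
      exact ((((((((hQ _).add (hQ _)).const_smul _).sub
        (((hQ _).add (hQ _)).const_smul _)).sub ((hQ _).const_smul _)).add
        ((hQ _).const_smul _)).sub ((hQ _).const_smul _)).add ((hQ _).const_smul _))
    rw [funext hfun] at hten
    have hzero : Tendsto (fun n : ℕ =>
        (4:ℝ)^n • Dop g (((2:ℝ)^n)⁻¹ • x) (((2:ℝ)^n)⁻¹ • y)) atTop (𝓝 0) := by
      apply squeeze_zero_norm (a := fun n : ℕ =>
        (4:ℝ)^n * φ (((2:ℝ)^n)⁻¹ • (2 • x)) (((2:ℝ)^n)⁻¹ • (2 • y))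
          + 16 * ((4:ℝ)^n * φ (((2:ℝ)^n)⁻¹ • x) (((2:ℝ)^n)⁻¹ • y)))
      · intro n
        have hp : (0:ℝ) ≤ (4:ℝ)^n := by positivity
        rw [hDg, norm_smul, Real.norm_eq_abs, abs_of_nonneg hp]
        rw [show (2 : ℕ) • (((2:ℝ)^n)⁻¹ • x) = ((2:ℝ)^n)⁻¹ • (2 • x) from by module,
            show (2 : ℕ) • (((2:ℝ)^n)⁻¹ • y) = ((2:ℝ)^n)⁻¹ • (2 • y) from by module]
        have h1 := hbd (((2:ℝ)^n)⁻¹ • (2 • x)) (((2:ℝ)^n)⁻¹ • (2 • y))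
        have h2 := hbd (((2:ℝ)^n)⁻¹ • x) (((2:ℝ)^n)⁻¹ • y)
        calc (4:ℝ)^n * ‖Dop f (((2:ℝ)^n)⁻¹ • (2 • x)) (((2:ℝ)^n)⁻¹ • (2 • y))
              - (16:ℝ) • Dop f (((2:ℝ)^n)⁻¹ • x) (((2:ℝ)^n)⁻¹ • y)‖
            ≤ (4:ℝ)^n * (‖Dop f (((2:ℝ)^n)⁻¹ • (2 • x)) (((2:ℝ)^n)⁻¹ • (2 • y))‖
              + 16 * ‖Dop f (((2:ℝ)^n)⁻¹ • x) (((2:ℝ)^n)⁻¹ • y)‖) := by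
              refine mul_le_mul_of_nonneg_left ?_ hp
              refine (norm_sub_le _ _).trans ?_
              rw [norm_smul, Real.norm_eq_abs]
              norm_num
          _ ≤ (4:ℝ)^n * φ (((2:ℝ)^n)⁻¹ • (2 • x)) (((2:ℝ)^n)⁻¹ • (2 • y))
              + 16 * ((4:ℝ)^n * φ (((2:ℝ)^n)⁻¹ • x) (((2:ℝ)^n)⁻¹ • y)) := by
              nlinarith [mul_le_mul_of_nonneg_left h1 hp, mul_le_mul_of_nonneg_left h2 hp]
      · have := (hlim (2 • x) (2 • y)).add ((hlim x y).const_mul 16)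
        simp only [mul_comm] at this ⊢
        simpa using this
    have hL := tendsto_nhds_unique hten hzero
    calc Dop Q₁ x y = (3:ℝ) • (Q₁ (x + 2•y) + Q₁ (x - 2•y))
        - (12:ℝ) • (Q₁ (x+y) + Q₁ (x-y)) - (4:ℝ) • Q₁ (3•y) + (18:ℝ) • Q₁ (2•y)
        - (36:ℝ) • Q₁ y + (18:ℝ) • Q₁ x := by simp only [Dop]; module
      _ = 0 := hL
  -- MixedEq Q₁
  have hMix : MixedEq Q₁ := by
    intro x y
    rw [← sub_eq_zero]
    calc 3 • (Q₁ (x + 2 • y) + Q₁ (x - 2 • y)) -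
          (12 • (Q₁ (x + y) + Q₁ (x - y)) + 4 • Q₁ (3 • y) - 18 • Q₁ (2 • y) + 36 • Q₁ y
            - 18 • Q₁ x)
        = Dop Q₁ x y := by simp only [Dop]; abel
      _ = 0 := hDQ x y
  -- Q₁ is quadratic
  have hQuad : IsQuadratic Q₁ := by
    intro x y
    have h := quad_aux Q₁ hQev hQzero hDQ x y
    rw [hQdouble (x+y), hQdouble (x-y), hQdouble x, hQdouble y] at h
    have h12 : ((-12:ℝ)) ≠ 0 := by norm_num
    apply smul_right_injective Y h12
    calc (-12:ℝ) • (Q₁ (x + y) + Q₁ (x - y))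
        = ((4:ℝ) • Q₁ (x+y) - 16 • Q₁ (x+y)) + ((4:ℝ) • Q₁ (x-y) - 16 • Q₁ (x-y)) := by
          module
      _ = 2 • ((4:ℝ) • Q₁ x - 16 • Q₁ x) + 2 • ((4:ℝ) • Q₁ y - 16 • Q₁ y) := h
      _ = (-12:ℝ) • (2 • Q₁ x + 2 • Q₁ y) := by module
  -- scaling of quadratic maps
  have hsc : ∀ (Q : X → Y), IsQuadratic Q → Q 0 = 0 →
      ∀ (x : X) (n : ℕ), Q x = (4:ℝ)^n • Q (((2:ℝ)^n)⁻¹ • x) := by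
    intro Q hq h0 x n
    have hdb : ∀ v : X, Q (2 • v) = (4:ℝ) • Q v := by
      intro v
      have h := hq v v
      rw [sub_self, h0, add_zero] at h
      calc Q (2 • v) = Q (v + v) := by rw [two_smul]
        _ = (4:ℝ) • Q v := by rw [h]; module
    induction n with
    | zero => norm_num
    | succ n ih =>
      have h2 : Q (((2:ℝ)^n)⁻¹ • x) = (4:ℝ) • Q (((2:ℝ)^(n+1))⁻¹ • x) := by
        rw [hhalf x n, hdb]
      rw [ih, h2, show ((4:ℝ)^(n+1)) = 4^n * 4 from pow_succ 4 n, mul_smul]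
  refine ⟨Q₁, ?_, hQuad, hMix, ?_, ?_⟩
  · intro x
    have heq : (fun n : ℕ => (4:ℝ)^n • (f (((2:ℝ)^n)⁻¹ • (2 • x)) - 16 • f (((2:ℝ)^n)⁻¹ • x)))
        = a x := by
      funext n
      simp only [ha_def, hg_def]
      rw [show ((2:ℝ)^n)⁻¹ • (2 • x) = 2 • (((2:ℝ)^n)⁻¹ • x) from by module]
    rw [heq]
    exact hQ x
  · intro x
    have h := hQbound x
    simp only [hg_def, hd_def] at h
    exact h
  · intro Q' hq' hm' hb'
    have hQ'0 : Q' 0 = 0 := by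
      have h := hq' 0 0
      rw [add_zero, sub_zero] at h
      have h2 : (2:ℝ) • Q' 0 = 0 := by
        calc (2:ℝ) • Q' 0 = 2 • Q' 0 + 2 • Q' 0 - (Q' 0 + Q' 0) := by module
          _ = (Q' 0 + Q' 0) - (Q' 0 + Q' 0) := by rw [← h]
          _ = 0 := by abel
      rcases smul_eq_zero.mp h2 with h | h
      · norm_num at h
      · exact h
    have hb₂ : ∀ u : X, ‖g u - Q' u‖ ≤ ∑' i, d u i := by
      intro u
      have h := hb' u
      simp only [hg_def, hd_def]
      exact h
    funext x
    have hdiff : ∀ n : ℕ, ‖Q' x - Q₁ x‖ ≤ 2 * ∑' i, d x (i + n) := by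
      intro n
      have hp : (0:ℝ) ≤ (4:ℝ)^n := by positivity
      have h1 : ‖Q' (((2:ℝ)^n)⁻¹ • x) - Q₁ (((2:ℝ)^n)⁻¹ • x)‖
          ≤ 2 * ∑' i, d (((2:ℝ)^n)⁻¹ • x) i := by
        calc ‖Q' (((2:ℝ)^n)⁻¹ • x) - Q₁ (((2:ℝ)^n)⁻¹ • x)‖
            = ‖(g (((2:ℝ)^n)⁻¹ • x) - Q₁ (((2:ℝ)^n)⁻¹ • x))
                - (g (((2:ℝ)^n)⁻¹ • x) - Q' (((2:ℝ)^n)⁻¹ • x))‖ := by congr 1; abel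
          _ ≤ ‖g (((2:ℝ)^n)⁻¹ • x) - Q₁ (((2:ℝ)^n)⁻¹ • x)‖
              + ‖g (((2:ℝ)^n)⁻¹ • x) - Q' (((2:ℝ)^n)⁻¹ • x)‖ := norm_sub_le _ _
          _ ≤ (∑' i, d (((2:ℝ)^n)⁻¹ • x) i) + ∑' i, d (((2:ℝ)^n)⁻¹ • x) i :=
              add_le_add (hQbound _) (hb₂ _)
          _ = 2 * ∑' i, d (((2:ℝ)^n)⁻¹ • x) i := by ring
      have h2 : ‖Q' x - Q₁ x‖
          = (4:ℝ)^n * ‖Q' (((2:ℝ)^n)⁻¹ • x) - Q₁ (((2:ℝ)^n)⁻¹ • x)‖ := by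
        rw [hsc Q' hq' hQ'0 x n, hsc Q₁ hQuad hQzero x n, ← smul_sub, norm_smul,
          Real.norm_eq_abs, abs_of_nonneg hp]
      have hshift : ∀ i : ℕ, (4:ℝ)^n * d (((2:ℝ)^n)⁻¹ • x) i = d x (i + n) := by
        intro i
        simp only [hd_def]
        have e : ∀ k : ℕ, ((2:ℝ)^k)⁻¹ • (((2:ℝ)^n)⁻¹ • x) = ((2:ℝ)^(k+n))⁻¹ • x := by
          intro k
          rw [smul_smul, ← mul_inv, ← pow_add]
        rw [e i, e (i+1), show i+1+n = i+n+1 from by omega, pow_add]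
        ring
      calc ‖Q' x - Q₁ x‖
          = (4:ℝ)^n * ‖Q' (((2:ℝ)^n)⁻¹ • x) - Q₁ (((2:ℝ)^n)⁻¹ • x)‖ := h2
        _ ≤ (4:ℝ)^n * (2 * ∑' i, d (((2:ℝ)^n)⁻¹ • x) i) := mul_le_mul_of_nonneg_left h1 hp
        _ = 2 * ∑' i, (4:ℝ)^n * d (((2:ℝ)^n)⁻¹ • x) i := by rw [tsum_mul_left]; ring
        _ = 2 * ∑' i, d x (i + n) := by simp only [hshift]
    have htail : Tendsto (fun n : ℕ => 2 * ∑' i, d x (i + n)) atTop (𝓝 0) := by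
      have hs := hd_sum x
      have heq : ∀ n : ℕ, ∑' i, d x (i + n)
          = (∑' i, d x i) - ∑ i ∈ Finset.range n, d x i := by
        intro n
        have h := Summable.sum_add_tsum_nat_add (f := d x) n hs
        linarith
      simp only [heq]
      have hpart := hs.hasSum.tendsto_sum_nat
      have hC : Tendsto (fun _ : ℕ => ∑' i, d x i) atTop (𝓝 (∑' i, d x i)) :=
        tendsto_const_nhds
      have := Tendsto.const_mul (2:ℝ) (hC.sub hpart)
      simpa using this
    have hle : ‖Q' x - Q₁ x‖ ≤ 0 := ge_of_tendsto' htail hdiff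
    exact sub_eq_zero.mp (norm_le_zero_iff.mp hle)
end

section
/- Let X be a real vector space, Y a real Banach space, and let f : X → Y be an even function with ‖D_f(x,y)‖ ≤ φ(x,y) for all x, y ∈ X, where φ : X × X → [0,∞) satisfies: ∑_{i=1}^∞ 16^i·(φ(x/2^i, x/2^{i+1}) + φ(x/2^i, x/2^i)) converges for all x ∈ X, and lim_{n→∞} 16^n·φ(x/2^n, y/2^n) = 0 for all x, y ∈ X. Then for each x ∈ X the limit Q₂(x) := lim_{n→∞} 16^n·(f(x/2^{n-1}) − 4·f(x/2^n)) exists, Q₂ : X → Y is a quartic function satisfying the mixed functional equation (1.5), ‖f(2x) − 4·f(x) − Q₂(x)‖ ≤ ∑_{i=0}^∞ 16^i·((1/3)·φ(x/2^i, x/2^{i+1}) + (16/3)·φ(x/2^{i+1}, x/2^{i+1})) for all x ∈ X, and Q₂ is the unique quartic function satisfying (1.5) and this inequality. -/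
open Filter Topology

/-!
Put `g x = f (2x) - 4 f x`. Evaluating `D_f` at `(2z, z)` and `(z, z)`, evenness and `f 0 = 0`
give `3 (g (2z) - 16 g z) = D_f (2z, z) - 16 D_f (z, z)`, so `g` is `16`-homogeneous under doubling
up to a summable error, and Hyers' direct method produces `Q x = lim 16ⁿ g (x / 2ⁿ)` with the stated
bound. Two `16`-homogeneous maps within that bound of `g` differ at `x` by `16ⁿ` times their
difference at `x / 2ⁿ`, i.e. by at most twice a tail of the series, hence coincide. Since
`D_g (x, y) = D_f (2x, 2y) - 4 D_f (x, y)`, the defect `D_Q` is a limit of rescaled defects of `f`,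
which tend to `0`; and for an even `16`-homogeneous `Q`, equation (1.5) at `(2x, y)` is twelve
times the quartic equation.
-/

section FunctionalEquations

variable {X Y : Type*} [AddCommGroup X] [AddCommGroup Y]

theorem mixedEq_iff_dop_eq_zero {f : X → Y} : MixedEq f ↔ ∀ x y, Dop f x y = 0 := by
  refine forall₂_congr fun x y => ?_
  rw [← sub_eq_zero (a := 3 • _)]
  constructor <;> intro h <;> (rw [← h]; unfold Dop; abel)

theorem dop_zero_zero (f : X → Y) : Dop f 0 0 = -(22 • f 0) := by
  simp only [Dop, smul_zero, add_zero, sub_zero]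
  abel

/-- `f (2x) - 4 f(x)` annihilates quadratic maps and multiplies quartic ones by `12`. -/
def quadDiff (f : X → Y) (x : X) : Y := f (2 • x) - 4 • f x

theorem quadDiff_neg {f : X → Y} (heven : ∀ x, f (-x) = f x) (x : X) :
    quadDiff f (-x) = quadDiff f x := by
  simp only [quadDiff, smul_neg, heven]

theorem dop_quadDiff (f : X → Y) (x y : X) :
    Dop (quadDiff f) x y = Dop f (2 • x) (2 • y) - 4 • Dop f x y := by
  simp only [Dop, quadDiff, nsmul_add, nsmul_sub, smul_comm 2 3 y]
  abel

theorem three_nsmul_quadDiff_sub {f : X → Y} (heven : ∀ x, f (-x) = f x) (h0 : f 0 = 0) (z : X) :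
    3 • (quadDiff f (2 • z) - 16 • quadDiff f z) = Dop f (2 • z) z - 16 • Dop f z z := by
  have e1 : 2 • z + 2 • z = 2 • 2 • z := by abel
  have e2 : 2 • z - 2 • z = 0 := by abel
  have e3 : 2 • z + z = 3 • z := by abel
  have e4 : 2 • z - z = z := by abel
  have e5 : z + 2 • z = 3 • z := by abel
  have e6 : z - 2 • z = -z := by abel
  have e7 : z + z = 2 • z := by abel
  have e8 : z - z = 0 := by abel
  simp only [Dop, quadDiff, e1, e2, e3, e4, e5, e6, e7, e8, heven, h0]
  abel

theorem dop_smul_comp_smul {R S : Type*} [Semiring R] [Module R X] [Semiring S] [Module S Y]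
    (h : X → Y) (c : S) (r : R) (x y : X) :
    Dop (fun z => c • h (r • z)) x y = c • Dop h (r • x) (r • y) := by
  simp only [Dop, smul_add, smul_sub, smul_comm r (2 : ℕ), smul_comm r (3 : ℕ), smul_comm c (_ : ℕ)]

variable [IsAddTorsionFree Y]

theorem map_zero_of_dop_zero_zero {f : X → Y} (h : Dop f 0 0 = 0) : f 0 = 0 := by
  rw [dop_zero_zero, neg_eq_zero] at h
  exact (smul_eq_zero.mp h).resolve_left (by norm_num)

theorem IsQuartic.map_zero {q : X → Y} (hq : IsQuartic q) : q 0 = 0 := by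
  have h := hq 0 0
  simp only [smul_zero, add_zero, sub_zero] at h
  have h24 : 24 • q 0 = 0 := by linear_combination (norm := module) (-1 : ℤ) • h
  exact (smul_eq_zero.mp h24).resolve_left (by norm_num)

theorem IsQuartic.map_two_nsmul {q : X → Y} (hq : IsQuartic q) (x : X) : q (2 • x) = 16 • q x := by
  have h := hq x 0
  simp only [add_zero, sub_zero, hq.map_zero] at h
  have h2 : 2 • (q (2 • x) - 16 • q x) = 0 := by linear_combination (norm := module) h
  exact sub_eq_zero.mp ((smul_eq_zero.mp h2).resolve_left (by norm_num))

theorem isQuartic_of_mixedEq {q : X → Y} (heven : ∀ x, q (-x) = q x)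
    (h2 : ∀ x, q (2 • x) = 16 • q x) (hq : MixedEq q) : IsQuartic q := by
  have h0 : q 0 = 0 := map_zero_of_dop_zero_zero (mixedEq_iff_dop_eq_zero.mp hq 0 0)
  have h3 (y : X) : q (3 • y) = 81 • q y := by
    have h := hq y y
    have e1 : y + 2 • y = 3 • y := by abel
    have e2 : y - 2 • y = -y := by abel
    have e3 : y + y = 2 • y := by abel
    rw [e1, e2, e3, sub_self, heven, h0, h2 y] at h
    linear_combination (norm := module) (-1 : ℤ) • h
  intro x y
  have h := hq (2 • x) y
  rw [← nsmul_add, ← nsmul_sub, h2 (x + y), h2 (x - y), h2 y, h2 x, h3] at h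
  have h12 : 12 • (q (2 • x + y) + q (2 • x - y) -
      (4 • (q (x + y) + q (x - y)) + 24 • q x - 6 • q y)) = 0 := by
    linear_combination (norm := module) (-1 : ℤ) • h
  exact sub_eq_zero.mp ((smul_eq_zero.mp h12).resolve_left (by norm_num))

end FunctionalEquations

theorem Filter.Tendsto.dop {X Y ι : Type*} [AddCommGroup X] [AddCommGroup Y] [TopologicalSpace Y]
    [IsTopologicalAddGroup Y] {l : Filter ι} {F : ι → X → Y} {Q : X → Y}
    (h : ∀ x, Tendsto (fun i => F i x) l (𝓝 (Q x))) (x y : X) :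
    Tendsto (fun i => Dop (F i) x y) l (𝓝 (Dop Q x y)) := by
  have hcont : Continuous fun f : X → Y => Dop f x y := by unfold Dop; fun_prop
  exact hcont.continuousAt.tendsto.comp (tendsto_pi_nhds.2 h)

theorem eq_zero_of_tendsto_pow_mul {a c : ℝ} (ha : 1 ≤ a) (hc : 0 ≤ c)
    (h : Tendsto (fun n : ℕ => a ^ n * c) atTop (𝓝 0)) : c = 0 :=
  le_antisymm (ge_of_tendsto h (.of_forall fun _ => le_mul_of_one_le_left hc (one_le_pow₀ ha))) hc

section DirectMethod

variable {X Y : Type*} [AddCommGroup X] [Module ℝ X] [NormedAddCommGroup Y] [NormedSpace ℝ Y]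
  {g Q Q' : X → Y} {ψ : X → ℝ} {a r : ℝ}

theorem dist_pow_smul_comp_le (ha : 0 ≤ a) (hg : ∀ z, ‖g z - a • g (r • z)‖ ≤ ψ z) (x : X)
    (n : ℕ) :
    dist (a ^ n • g (r ^ n • x)) (a ^ (n + 1) • g (r ^ (n + 1) • x)) ≤ a ^ n * ψ (r ^ n • x) := by
  rw [dist_eq_norm, pow_succ a, pow_succ' r, mul_smul, mul_smul, ← smul_sub, norm_smul,
    Real.norm_of_nonneg (pow_nonneg ha n)]
  exact mul_le_mul_of_nonneg_left (hg _) (pow_nonneg ha n)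

theorem exists_tendsto_pow_smul_comp [CompleteSpace Y] (ha : 0 ≤ a)
    (hg : ∀ z, ‖g z - a • g (r • z)‖ ≤ ψ z) (hsum : ∀ x, Summable fun i => a ^ i * ψ (r ^ i • x)) :
    ∃ Q : X → Y, (∀ x, Tendsto (fun n => a ^ n • g (r ^ n • x)) atTop (𝓝 (Q x))) ∧
      ∀ x, ‖g x - Q x‖ ≤ ∑' i, a ^ i * ψ (r ^ i • x) := by
  have hcauchy (x : X) :=
    cauchySeq_of_dist_le_of_summable _ (dist_pow_smul_comp_le ha hg x) (hsum x)
  choose Q hQ using fun x => cauchySeq_tendsto_of_complete (hcauchy x)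
  refine ⟨Q, hQ, fun x => ?_⟩
  simpa [dist_eq_norm] using
    dist_le_tsum_of_dist_le_of_tendsto₀ _ (dist_pow_smul_comp_le ha hg x) (hsum x) (hQ x)

theorem eq_smul_comp_of_tendsto (hQ : ∀ x, Tendsto (fun n => a ^ n • g (r ^ n • x)) atTop (𝓝 (Q x)))
    (x : X) : Q x = a • Q (r • x) := by
  have hshift (n : ℕ) : a ^ (n + 1) • g (r ^ (n + 1) • x) = a • a ^ n • g (r ^ n • r • x) := by
    rw [pow_succ' a, pow_succ r, mul_smul, mul_smul]
  refine tendsto_nhds_unique ((hQ x).comp (tendsto_add_atTop_nat 1)) ?_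
  simpa only [Function.comp_def, hshift] using (hQ (r • x)).const_smul a

theorem eq_pow_smul_comp (hQ : ∀ x, Q x = a • Q (r • x)) (x : X) (n : ℕ) :
    Q x = a ^ n • Q (r ^ n • x) := by
  induction n with
  | zero => simp
  | succ n ih => rw [ih, hQ (r ^ n • x), smul_smul, smul_smul, ← pow_succ, ← pow_succ']

theorem eq_of_norm_sub_le_tsum_s9 (ha : 0 ≤ a) (hQ : ∀ x, Q x = a • Q (r • x))
    (hQ' : ∀ x, Q' x = a • Q' (r • x)) (hgQ : ∀ x, ‖g x - Q x‖ ≤ ∑' i, a ^ i * ψ (r ^ i • x))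
    (hgQ' : ∀ x, ‖g x - Q' x‖ ≤ ∑' i, a ^ i * ψ (r ^ i • x)) : Q = Q' := by
  funext x
  have hle (n : ℕ) : ‖Q x - Q' x‖ ≤ 2 * ∑' i, a ^ (i + n) * ψ (r ^ (i + n) • x) := by
    calc ‖Q x - Q' x‖ = a ^ n * ‖Q (r ^ n • x) - Q' (r ^ n • x)‖ := by
          rw [eq_pow_smul_comp hQ x n, eq_pow_smul_comp hQ' x n, ← smul_sub, norm_smul,
            Real.norm_of_nonneg (pow_nonneg ha n)]
      _ ≤ a ^ n * (‖g (r ^ n • x) - Q (r ^ n • x)‖ + ‖g (r ^ n • x) - Q' (r ^ n • x)‖) := by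
          gcongr
          rw [← norm_neg (g _ - Q _), neg_sub]
          exact norm_sub_le_norm_sub_add_norm_sub _ _ _
      _ ≤ a ^ n * (2 * ∑' i, a ^ i * ψ (r ^ i • r ^ n • x)) := by
          gcongr; linarith [hgQ (r ^ n • x), hgQ' (r ^ n • x)]
      _ = 2 * ∑' i, a ^ (i + n) * ψ (r ^ (i + n) • x) := by
          rw [mul_left_comm, ← tsum_mul_left]
          congr 1
          refine tsum_congr fun i => ?_
          rw [smul_smul, ← pow_add, pow_add a]
          ring
  have htail := (tendsto_sum_nat_add fun i => a ^ i * ψ (r ^ i • x)).const_mul 2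
  rw [mul_zero] at htail
  exact sub_eq_zero.mp (norm_le_zero_iff.mp (ge_of_tendsto htail (.of_forall hle)))

theorem dop_eq_zero_of_tendsto {χ : X → X → ℝ} (ha : 0 ≤ a)
    (hQ : ∀ x, Tendsto (fun n => a ^ n • g (r ^ n • x)) atTop (𝓝 (Q x)))
    (hg : ∀ x y, ‖Dop g x y‖ ≤ χ x y)
    (hχ : ∀ x y, Tendsto (fun n => a ^ n * χ (r ^ n • x) (r ^ n • y)) atTop (𝓝 0)) (x y : X) :
    Dop Q x y = 0 := by
  refine tendsto_nhds_unique (Tendsto.dop hQ x y) (squeeze_zero_norm (fun n => ?_) (hχ x y))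
  rw [dop_smul_comp_smul, norm_smul, Real.norm_of_nonneg (pow_nonneg ha n)]
  exact mul_le_mul_of_nonneg_left (hg _ _) (pow_nonneg ha n)

end DirectMethod

theorem norm_dop_quadDiff_le {X Y : Type*} [AddCommGroup X] [SeminormedAddCommGroup Y]
    {f : X → Y} {φ : X → X → ℝ} (hbd : ∀ x y, ‖Dop f x y‖ ≤ φ x y) (x y : X) :
    ‖Dop (quadDiff f) x y‖ ≤ φ (2 • x) (2 • y) + 4 * φ x y := by
  rw [dop_quadDiff]
  have h4 : ‖4 • Dop f x y‖ ≤ 4 * ‖Dop f x y‖ := by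
    simpa using norm_nsmul_le (n := 4) (a := Dop f x y)
  linarith [norm_sub_le (Dop f (2 • x) (2 • y)) (4 • Dop f x y), hbd (2 • x) (2 • y), hbd x y]

section Stability

variable {X Y : Type*} [AddCommGroup X] [Module ℝ X] [NormedAddCommGroup Y] [NormedSpace ℝ Y]
  {f : X → Y} {φ : X → X → ℝ}

theorem forall_apply_two_nsmul_iff {q : X → Y} :
    (∀ x, q (2 • x) = 16 • q x) ↔ ∀ x, q x = (16 : ℝ) • q ((2 : ℝ)⁻¹ • x) := by
  simp only [← ofNat_smul_eq_nsmul ℝ]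
  constructor <;> intro h x
  · rw [← h, smul_inv_smul₀ two_ne_zero]
  · rw [h, inv_smul_smul₀ two_ne_zero]

theorem norm_quadDiff_sub_le (heven : ∀ x, f (-x) = f x) (h0 : f 0 = 0)
    (hbd : ∀ x y, ‖Dop f x y‖ ≤ φ x y) (z : X) :
    ‖quadDiff f z - (16 : ℝ) • quadDiff f ((2 : ℝ)⁻¹ • z)‖ ≤
      (1 / 3) * φ z ((2 : ℝ)⁻¹ • z) + (16 / 3) * φ ((2 : ℝ)⁻¹ • z) ((2 : ℝ)⁻¹ • z) := by
  have hz : 2 • (2 : ℝ)⁻¹ • z = z := by rw [← ofNat_smul_eq_nsmul ℝ, smul_inv_smul₀ two_ne_zero]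
  have h3 := congrArg norm (three_nsmul_quadDiff_sub heven h0 ((2 : ℝ)⁻¹ • z))
  have hD := norm_sub_le (Dop f z ((2 : ℝ)⁻¹ • z))
    ((16 : ℝ) • Dop f ((2 : ℝ)⁻¹ • z) ((2 : ℝ)⁻¹ • z))
  simp only [hz, ← ofNat_smul_eq_nsmul ℝ, norm_smul, Real.norm_ofNat] at h3 hD
  linarith [hbd z ((2 : ℝ)⁻¹ • z), hbd ((2 : ℝ)⁻¹ • z) ((2 : ℝ)⁻¹ • z)]

theorem summable_error (hφ0 : ∀ x y, 0 ≤ φ x y) (x : X)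
    (hsum : Summable fun i : ℕ => (16 : ℝ) ^ (i + 1) *
      (φ (((2 : ℝ) ^ (i + 1))⁻¹ • x) (((2 : ℝ) ^ (i + 2))⁻¹ • x) +
        φ (((2 : ℝ) ^ (i + 1))⁻¹ • x) (((2 : ℝ) ^ (i + 1))⁻¹ • x))) :
    Summable fun i : ℕ => (16 : ℝ) ^ i *
      ((1 / 3) * φ (((2 : ℝ) ^ i)⁻¹ • x) (((2 : ℝ) ^ (i + 1))⁻¹ • x) +
        (16 / 3) * φ (((2 : ℝ) ^ (i + 1))⁻¹ • x) (((2 : ℝ) ^ (i + 1))⁻¹ • x)) := by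
  set u : ℕ → ℝ := fun i => 16 ^ i * φ (((2 : ℝ) ^ i)⁻¹ • x) (((2 : ℝ) ^ (i + 1))⁻¹ • x)
  set v : ℕ → ℝ := fun i => 16 ^ i * φ (((2 : ℝ) ^ i)⁻¹ • x) (((2 : ℝ) ^ i)⁻¹ • x)
  have hu : Summable fun i => u (i + 1) :=
    hsum.of_nonneg_of_le (fun i => mul_nonneg (by positivity) (hφ0 _ _))
      fun i => mul_le_mul_of_nonneg_left (le_add_of_nonneg_right (hφ0 _ _)) (by positivity)
  have hv : Summable fun i => v (i + 1) :=
    hsum.of_nonneg_of_le (fun i => mul_nonneg (by positivity) (hφ0 _ _))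
      fun i => mul_le_mul_of_nonneg_left (le_add_of_nonneg_left (hφ0 _ _)) (by positivity)
  refine ((((summable_nat_add_iff 1).1 hu).add hv).div_const 3).congr fun i => ?_
  simp only [u, v]
  ring

end Stability

theorem stmt_9 {X Y : Type*} [AddCommGroup X] [Module ℝ X]
    [NormedAddCommGroup Y] [NormedSpace ℝ Y] [CompleteSpace Y]
    (f : X → Y) (heven : ∀ x : X, f (-x) = f x)
    (φ : X → X → ℝ) (hφ0 : ∀ x y : X, 0 ≤ φ x y)
    (hbd : ∀ x y : X, ‖Dop f x y‖ ≤ φ x y)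
    (hsum : ∀ x : X, Summable fun i : ℕ =>
      (16 : ℝ) ^ (i + 1) *
        (φ (((2 : ℝ) ^ (i + 1))⁻¹ • x) (((2 : ℝ) ^ (i + 2))⁻¹ • x) +
          φ (((2 : ℝ) ^ (i + 1))⁻¹ • x) (((2 : ℝ) ^ (i + 1))⁻¹ • x)))
    (hlim : ∀ x y : X, Tendsto
      (fun n : ℕ => (16 : ℝ) ^ n * φ (((2 : ℝ) ^ n)⁻¹ • x) (((2 : ℝ) ^ n)⁻¹ • y)) atTop (𝓝 0)) :
    ∃ Q₂ : X → Y,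
      (∀ x : X, Tendsto (fun n : ℕ =>
        (16 : ℝ) ^ n • (f (((2 : ℝ) ^ n)⁻¹ • (2 • x)) - 4 • f (((2 : ℝ) ^ n)⁻¹ • x)))
        atTop (𝓝 (Q₂ x))) ∧
      IsQuartic Q₂ ∧ MixedEq Q₂ ∧
      (∀ x : X, ‖f (2 • x) - 4 • f x - Q₂ x‖ ≤
        ∑' i : ℕ, (16 : ℝ) ^ i *
          ((1 / 3) * φ (((2 : ℝ) ^ i)⁻¹ • x) (((2 : ℝ) ^ (i + 1))⁻¹ • x) +
            (16 / 3) * φ (((2 : ℝ) ^ (i + 1))⁻¹ • x) (((2 : ℝ) ^ (i + 1))⁻¹ • x))) ∧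
      (∀ Q₂' : X → Y, IsQuartic Q₂' → MixedEq Q₂' →
        (∀ x : X, ‖f (2 • x) - 4 • f x - Q₂' x‖ ≤
          ∑' i : ℕ, (16 : ℝ) ^ i *
            ((1 / 3) * φ (((2 : ℝ) ^ i)⁻¹ • x) (((2 : ℝ) ^ (i + 1))⁻¹ • x) +
              (16 / 3) * φ (((2 : ℝ) ^ (i + 1))⁻¹ • x) (((2 : ℝ) ^ (i + 1))⁻¹ • x))) →
        Q₂' = Q₂) := by
  have : IsAddTorsionFree Y := .of_isTorsionFree ℝ Y
  have hf0 : f 0 = 0 := by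
    have hφ00 :=
      eq_zero_of_tendsto_pow_mul (a := 16) (by norm_num) (hφ0 0 0) (by simpa using hlim 0 0)
    exact map_zero_of_dop_zero_zero (norm_le_zero_iff.mp (hφ00 ▸ hbd 0 0))
  set ψ : X → ℝ := fun z =>
    (1 / 3) * φ z ((2 : ℝ)⁻¹ • z) + (16 / 3) * φ ((2 : ℝ)⁻¹ • z) ((2 : ℝ)⁻¹ • z)
  obtain ⟨Q, hQ, hbound⟩ := exists_tendsto_pow_smul_comp (ψ := ψ) (by norm_num)
    (norm_quadDiff_sub_le heven hf0 hbd) fun x => by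
      simpa only [ψ, inv_pow, smul_smul, ← mul_inv, ← pow_succ'] using summable_error hφ0 x (hsum x)
  have hscale := eq_smul_comp_of_tendsto hQ
  have hχ (x y : X) : Tendsto (fun n => (16 : ℝ) ^ n *
      (φ (2 • (2 : ℝ)⁻¹ ^ n • x) (2 • (2 : ℝ)⁻¹ ^ n • y) +
        4 * φ ((2 : ℝ)⁻¹ ^ n • x) ((2 : ℝ)⁻¹ ^ n • y))) atTop (𝓝 0) := by
    have h := (hlim (2 • x) (2 • y)).add ((hlim x y).const_mul 4)
    simp only [← inv_pow, smul_comm (_ : ℝ) (2 : ℕ) (_ : X), mul_zero, add_zero] at h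
    convert h using 2
    ring
  have hmixed : MixedEq Q := mixedEq_iff_dop_eq_zero.mpr
    (dop_eq_zero_of_tendsto (by norm_num) hQ (norm_dop_quadDiff_le hbd) hχ)
  have heven_Q (x : X) : Q (-x) = Q x :=
    tendsto_nhds_unique (hQ (-x)) (by simpa only [smul_neg, quadDiff_neg heven] using hQ x)
  refine ⟨Q, fun x => ?_,
    isQuartic_of_mixedEq heven_Q (forall_apply_two_nsmul_iff.mpr hscale) hmixed, hmixed,
    fun x => ?_, fun Q' hq _ hQ' => ?_⟩
  · simpa only [quadDiff, inv_pow, smul_comm _ (2 : ℕ)] using hQ x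
  · simpa only [ψ, quadDiff, inv_pow, smul_smul, ← mul_inv, ← pow_succ'] using hbound x
  · refine (eq_of_norm_sub_le_tsum_s9 (by norm_num) hscale
      (forall_apply_two_nsmul_iff.mp hq.map_two_nsmul) hbound fun x => ?_).symm
    simpa only [ψ, quadDiff, inv_pow, smul_smul, ← mul_inv, ← pow_succ'] using hQ' x
end
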